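/- arXiv:1012.5171 — 10 statements merged into one kernel-verified Lean document; each statement's English description precedes it below -/
import Mathlib

section
/- Let f : [0,∞) → [0,∞) be a concave function and let A, B be n×n positive semidefinite complex matrices. Then there exist unitary matrices U, V ∈ M_n(ℂ) such that f(A+B) ≤ U f(A) U* + V f(B) V* in the Loewner order. -/
/-!
With `f 0 = 0`, put `Z = A + B` and `G = g(Z)` for `g x = √(f x / x)`, so that
`f(Z) = G A G + G B G`; it then suffices to find a unitary `U` with `G A G ≤ U f(A) U*`, that is,
to bound the decreasingly ordered eigenvalues `λₖ(G A G) ≤ f(λₖ(A))`.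

Write `A = Z^½ C Z^½` with `0 ≤ C ≤ 1` and let `R = C^½`. Since `M Mᴴ` and `Mᴴ M` have the same
characteristic polynomial, `G A G` has the eigenvalues of `R f(Z) R` and `A` those of `R Z R`.
For `x` orthogonal to the top `k` eigenvectors of `R Z R`, expand `R x` in an eigenbasis `(zⱼ)` of
`Z`: the weights `tⱼ = |⟪zⱼ, R x⟫|²` have mass at most `‖x‖²` and `∑ tⱼ λⱼ(Z) ≤ λₖ(R Z R) ‖x‖²`,
so Jensen's inequality (the missing mass sitting at `0`) gives
`⟪x, R f(Z) R x⟫ ≤ f(λₖ(R Z R)) ‖x‖²`, and the min-max principle turns this into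
`λₖ(R f(Z) R) ≤ f(λₖ(R Z R))`.

A nonnegative concave function on `[0, ∞)` is nondecreasing, and the general case follows by
splitting off the constant `f 0 ≥ 0`, which commutes with unitary conjugation.
-/

open scoped InnerProductSpace Matrix MatrixOrder ComplexOrder
open Module Set

theorem ConcaveOn.monotoneOn_of_forall_le {f : ℝ → ℝ} {a m : ℝ} (hf : ConcaveOn ℝ (Ici a) f)
    (hm : ∀ x ∈ Ici a, m ≤ f x) : MonotoneOn f (Ici a) := by
  intro x hx y hy hxy
  by_contra! hlt
  have hxy' : x < y := hxy.lt_of_ne (by rintro rfl; exact hlt.false)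
  set d := (f x - f y) / (y - x) with hd
  have hd0 : 0 < d := div_pos (by linarith) (by linarith)
  -- concavity keeps every slope beyond `y` at most `-d`, so `f` drops below `m` at `z`
  set z := y + (f y - m) / d + 1
  have hyz : y < z := by
    have : 0 ≤ (f y - m) / d := div_nonneg (by linarith [hm y hy]) hd0.le
    linarith
  have hzI : z ∈ Ici a := le_trans hy hyz.le
  have hslope := hf.slope_anti_adjacent hx hzI hxy' hyz
  rw [div_le_iff₀ (by linarith), show (f y - f x) / (y - x) = -d by rw [hd]; ring] at hslope
  have : d * ((f y - m) / d) = f y - m := mul_div_cancel₀ _ hd0.ne'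
  nlinarith [hm z hzI]

theorem ConcaveOn.sum_mul_le_mul_of_sum_le {ι : Type*} [Fintype ι] {f : ℝ → ℝ}
    (hfc : ConcaveOn ℝ (Ici 0) f) (hfm : MonotoneOn f (Ici 0)) (hf0 : 0 ≤ f 0)
    {t z : ι → ℝ} {s μ : ℝ} (ht : ∀ i, 0 ≤ t i) (hz : ∀ i, 0 ≤ z i) (hμ : 0 ≤ μ)
    (hts : ∑ i, t i ≤ s) (htz : ∑ i, z i * t i ≤ μ * s) :
    ∑ i, f (z i) * t i ≤ f μ * s := by
  rcases (Finset.sum_nonneg fun i _ => ht i).trans hts |>.eq_or_lt with rfl | hs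
  · have ht0 : ∀ i, t i = 0 := fun i =>
      (Finset.sum_eq_zero_iff_of_nonneg fun i _ => ht i).mp
        (le_antisymm hts (Finset.sum_nonneg fun i _ => ht i)) i (Finset.mem_univ i)
    simp [ht0]
  -- Jensen for the weights `t i / s` at the points `z i`, with the remaining mass put at `0`.
  have hmass : ∑ i, t i / s ≤ 1 := by
    rw [← Finset.sum_div]
    exact (div_le_one hs).mpr hts
  let w : Option ι → ℝ := fun o => o.elim (1 - ∑ i, t i / s) fun i => t i / s
  let p : Option ι → ℝ := fun o => o.elim 0 z
  have hjensen := hfc.le_map_sum (t := Finset.univ) (w := w) (p := p)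
    (by
      rintro (_ | i) _
      · exact sub_nonneg.mpr hmass
      · exact div_nonneg (ht i) hs.le)
    (by simp [w, Fintype.sum_option])
    (by rintro (_ | i) _ <;> simp [p, hz])
  simp only [Fintype.sum_option, w, p, Option.elim_none, Option.elim_some, smul_eq_mul,
    mul_zero, zero_add] at hjensen
  have hdiv : ∀ c : ι → ℝ, ∑ i, t i / s * c i = (∑ i, c i * t i) / s := fun c => by
    rw [Finset.sum_div]
    exact Finset.sum_congr rfl fun i _ => by ring
  have hmean : ∑ i, t i / s * z i ≤ μ := by
    rw [hdiv, div_le_iff₀ hs]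
    exact htz
  have hle := hjensen.trans (hfm (Finset.sum_nonneg fun i _ => mul_nonneg
    (div_nonneg (ht i) hs.le) (hz i)) hμ hmean)
  have hrest : 0 ≤ (1 - ∑ i, t i / s) * f 0 := mul_nonneg (sub_nonneg.mpr hmass) hf0
  rw [hdiv] at hle
  rw [← div_le_iff₀ hs]
  linarith

namespace LinearMap.IsSymmetric

variable {𝕜 E : Type*} [RCLike 𝕜] [NormedAddCommGroup E] [InnerProductSpace 𝕜 E]
  {T : E →ₗ[𝕜] E}

theorem re_inner_apply_self_eq_sum (hT : T.IsSymmetric) {ι : Type*} [Fintype ι]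
    (b : OrthonormalBasis ι 𝕜 E) (c : ι → ℝ) (hb : ∀ i, T (b i) = (c i : 𝕜) • b i) (x : E) :
    RCLike.re ⟪x, T x⟫_𝕜 = ∑ i, c i * ‖⟪b i, x⟫_𝕜‖ ^ 2 := by
  rw [← b.sum_inner_mul_inner, map_sum]
  refine Finset.sum_congr rfl fun i _ => ?_
  rw [← hT, hb, inner_smul_left, RCLike.conj_ofReal, mul_left_comm, RCLike.re_ofReal_mul,
    inner_mul_symm_re_eq_norm, norm_mul, norm_inner_symm, sq]

variable [FiniteDimensional 𝕜 E] {n : ℕ} (hT : T.IsSymmetric) (hn : finrank 𝕜 E = n)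

theorem re_inner_apply_self_le_eigenvalues_mul (k : Fin n) {x : E}
    (hx : ∀ i < k, ⟪hT.eigenvectorBasis hn i, x⟫_𝕜 = 0) :
    RCLike.re ⟪x, T x⟫_𝕜 ≤ hT.eigenvalues hn k * ‖x‖ ^ 2 := by
  rw [hT.re_inner_apply_self_eq_sum _ _ (hT.apply_eigenvectorBasis hn),
    ← (hT.eigenvectorBasis hn).sum_sq_norm_inner_right, Finset.mul_sum]
  refine Finset.sum_le_sum fun i _ => ?_
  rcases lt_or_ge i k with hik | hki
  · simp [hx i hik]
  · exact mul_le_mul_of_nonneg_right (hT.eigenvalues_antitone hn hki) (by positivity)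

theorem eigenvalues_mul_le_re_inner_apply_self (k : Fin n) {x : E}
    (hx : ∀ i, k < i → ⟪hT.eigenvectorBasis hn i, x⟫_𝕜 = 0) :
    hT.eigenvalues hn k * ‖x‖ ^ 2 ≤ RCLike.re ⟪x, T x⟫_𝕜 := by
  rw [hT.re_inner_apply_self_eq_sum _ _ (hT.apply_eigenvectorBasis hn),
    ← (hT.eigenvectorBasis hn).sum_sq_norm_inner_right, Finset.mul_sum]
  refine Finset.sum_le_sum fun i _ => ?_
  rcases lt_or_ge k i with hki | hik
  · simp [hx i hki]
  · exact mul_le_mul_of_nonneg_right (hT.eigenvalues_antitone hn hik) (by positivity)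

theorem eigenvalues_le_of_forall_mem (k : Fin n) (V : Submodule 𝕜 E)
    (hV : n ≤ finrank 𝕜 V + k) (c : ℝ) (h : ∀ x ∈ V, RCLike.re ⟪x, T x⟫_𝕜 ≤ c * ‖x‖ ^ 2) :
    hT.eigenvalues hn k ≤ c := by
  set b := hT.eigenvectorBasis hn
  let W := Submodule.span 𝕜 (Set.range fun i : {i : Fin n // (i : ℕ) < k + 1} => b i)
  have hW : finrank 𝕜 W = k + 1 := by
    rw [finrank_span_eq_card (b := fun i : {i : Fin n // (i : ℕ) < k + 1} => b i)
      (b.orthonormal.linearIndependent.comp _ Subtype.val_injective),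
      Fintype.card_fin_lt_of_le k.isLt]
  have hWV : W ⊓ V ≠ ⊥ := by
    intro hbot
    have := Submodule.finrank_sup_add_finrank_inf_eq W V
    rw [hbot, finrank_bot, hW] at this
    have := Submodule.finrank_le (W ⊔ V)
    omega
  obtain ⟨x, ⟨hxW, hxV⟩, hx0⟩ := Submodule.exists_mem_ne_zero_of_ne_bot hWV
  have hperp : ∀ i, k < i → ⟪b i, x⟫_𝕜 = 0 := by
    intro i hki
    refine (Submodule.mem_orthogonal_singleton_iff_inner_right).mp
      (Submodule.span_le.mpr ?_ hxW)
    rintro _ ⟨j, rfl⟩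
    refine Submodule.mem_orthogonal_singleton_iff_inner_right.mpr
      (b.orthonormal.inner_eq_zero fun hij => ?_)
    have := j.2
    rw [← hij] at this
    omega
  have hx : 0 < ‖x‖ ^ 2 := by positivity
  exact le_of_mul_le_mul_right
    ((hT.eigenvalues_mul_le_re_inner_apply_self hn k hperp).trans (h x hxV)) hx

theorem eigenvalues_le_of_forall_inner_eigenvectorBasis_eq_zero {S : E →ₗ[𝕜] E}
    (hS : S.IsSymmetric) (k : Fin n) (c : ℝ)
    (h : ∀ x, (∀ i < k, ⟪hS.eigenvectorBasis hn i, x⟫_𝕜 = 0) →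
      RCLike.re ⟪x, T x⟫_𝕜 ≤ c * ‖x‖ ^ 2) :
    hT.eigenvalues hn k ≤ c := by
  let U := Submodule.span 𝕜
    (Set.range fun i : {i : Fin n // (i : ℕ) < k} => hS.eigenvectorBasis hn i)
  have hU : finrank 𝕜 U ≤ k :=
    (finrank_range_le_card _).trans (Fintype.card_fin_lt_of_le k.isLt.le).le
  refine hT.eigenvalues_le_of_forall_mem hn k Uᗮ ?_ c fun x hx => h x fun i hik => ?_
  · have := U.finrank_add_finrank_orthogonal
    omega
  · exact Submodule.inner_right_of_mem_orthogonal
      (Submodule.subset_span (Set.mem_range_self (⟨i, hik⟩ : {i : Fin n // (i : ℕ) < k}))) hx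

end LinearMap.IsSymmetric

namespace Matrix

variable {𝕜 : Type*} [RCLike 𝕜] {n : Type*} [Fintype n] [DecidableEq n]

theorem cfc_mul_cfc (f g : ℝ → ℝ) (A : Matrix n n 𝕜) :
    cfc f A * cfc g A = cfc (fun x => f x * g x) A :=
  (cfc_mul f g A (A.finite_real_spectrum.continuousOn f)
    (A.finite_real_spectrum.continuousOn g)).symm

theorem self_mul_cfc (g : ℝ → ℝ) {Z : Matrix n n 𝕜} (hZ : IsSelfAdjoint Z) :
    Z * cfc g Z = cfc (fun x => x * g x) Z := by
  conv_lhs => enter [1]; rw [← cfc_id' ℝ Z]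
  exact cfc_mul_cfc _ _ Z

theorem star_cfc (f : ℝ → ℝ) (A : Matrix n n 𝕜) : star (cfc f A) = cfc f A :=
  (cfc_predicate f A).star_eq

theorem cfc_sqrt_mul_self {A : Matrix n n 𝕜} (hA : 0 ≤ A) :
    cfc Real.sqrt A * cfc Real.sqrt A = A := by
  conv_rhs => rw [← cfc_id' ℝ A]
  rw [cfc_mul_cfc]
  exact cfc_congr fun x hx => Real.mul_self_sqrt (spectrum_nonneg_of_nonneg hA hx)

theorem mul_eq_zero_of_le_of_mul_eq_zero {A Z E : Matrix n n 𝕜} (hA : 0 ≤ A) (hAZ : A ≤ Z)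
    (hZE : Z * E = 0) : A * E = 0 := by
  have hEAE : star E * A * E = 0 := le_antisymm
    (by simpa [mul_assoc, hZE] using star_left_conjugate_le_conjugate hAZ E)
    (star_left_conjugate_nonneg hA E)
  set R := cfc Real.sqrt A
  have hR : Rᴴ = R := star_cfc _ A
  have hRE : R * E = 0 := conjTranspose_mul_self_eq_zero.mp <| by
    rw [conjTranspose_mul, hR, mul_assoc, ← mul_assoc R, cfc_sqrt_mul_self hA, ← mul_assoc]
    exact hEAE
  rw [← cfc_sqrt_mul_self hA, mul_assoc, hRE, mul_zero]

theorem IsHermitian.eigenvalues₀_eq_of_charpoly_eq {A B : Matrix n n 𝕜} (hA : A.IsHermitian)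
    (hB : B.IsHermitian) (h : A.charpoly = B.charpoly) : hA.eigenvalues₀ = hB.eigenvalues₀ := by
  simp_rw [← List.ofFn_inj, ← sort_roots_charpoly_eq_eigenvalues₀, h]

theorem IsHermitian.toEuclideanLin_cfc_eigenvectorBasis {A : Matrix n n 𝕜} (hA : A.IsHermitian)
    (f : ℝ → ℝ) (j : n) :
    toEuclideanLin (cfc f A) (hA.eigenvectorBasis j) =
      (f (hA.eigenvalues j) : 𝕜) • hA.eigenvectorBasis j := by
  ext1
  rw [toLpLin_apply, hA.cfc_eq, IsHermitian.cfc, Unitary.conjStarAlgAut_apply, ← mulVec_mulVec,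
    ← mulVec_mulVec, star_eigenvectorUnitary_mulVec, diagonal_mulVec_single, mul_one]
  simp [mulVec_single, RCLike.real_smul_eq_coe_mul, mul_comm]

theorem inner_toEuclideanLin_conjTranspose_mul_mul (K M : Matrix n n 𝕜)
    (x : EuclideanSpace 𝕜 n) :
    ⟪x, toEuclideanLin (Kᴴ * M * K) x⟫_𝕜 =
      ⟪toEuclideanLin K x, toEuclideanLin M (toEuclideanLin K x)⟫_𝕜 := by
  simp only [toLpLin_mul_same, LinearMap.comp_apply, toEuclideanLin_conjTranspose_eq_adjoint,
    LinearMap.adjoint_inner_right]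

theorem norm_toEuclideanLin_le_of_conjTranspose_mul_self_le_one {K : Matrix n n 𝕜}
    (hK : Kᴴ * K ≤ 1) (x : EuclideanSpace 𝕜 n) : ‖toEuclideanLin K x‖ ≤ ‖x‖ := by
  have h := (isPositive_toEuclideanLin_iff.mpr hK).re_inner_nonneg_right x
  rw [map_sub, LinearMap.sub_apply, inner_sub_right, map_sub, ← mul_one Kᴴ,
    inner_toEuclideanLin_conjTranspose_mul_mul, toLpLin_one] at h
  simp only [LinearMap.id_apply, inner_self_eq_norm_sq_to_K, ← RCLike.ofReal_pow,
    RCLike.ofReal_re, sub_nonneg] at h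
  exact sq_le_sq₀ (norm_nonneg _) (norm_nonneg _) |>.mp h

theorem IsHermitian.exists_unitary_le_conj_cfc {X A : Matrix n n 𝕜} (hX : X.IsHermitian)
    (hA : A.IsHermitian) (f : ℝ → ℝ) (h : ∀ k, hX.eigenvalues₀ k ≤ f (hA.eigenvalues₀ k)) :
    ∃ U ∈ unitaryGroup n 𝕜, X ≤ U * cfc f A * Uᴴ := by
  set UX : Matrix n n 𝕜 := (hX.eigenvectorUnitary : Matrix n n 𝕜)
  set UA : Matrix n n 𝕜 := (hA.eigenvectorUnitary : Matrix n n 𝕜)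
  refine ⟨UX * star UA,
    mul_mem hX.eigenvectorUnitary.2 (Unitary.star_mem hA.eigenvectorUnitary.2), ?_⟩
  have hconj : UX * star UA * cfc f A * (UX * star UA)ᴴ = Unitary.conjStarAlgAut 𝕜 _
      hX.eigenvectorUnitary (diagonal (RCLike.ofReal ∘ f ∘ hA.eigenvalues)) := by
    have hUA : star UA * UA = 1 := Unitary.coe_star_mul_self hA.eigenvectorUnitary
    simp only [hA.cfc_eq, IsHermitian.cfc, Unitary.conjStarAlgAut_apply, ← star_eq_conjTranspose,
      star_mul, star_star, mul_assoc]
    rw [← mul_assoc (star UA), hUA, one_mul, ← mul_assoc (star UA), hUA, one_mul]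
  rw [hconj, ← sub_nonneg]
  nth_rw 2 [hX.spectral_theorem]
  rw [← map_sub, diagonal_sub, Unitary.conjStarAlgAut_apply]
  refine star_right_conjugate_nonneg (nonneg_iff_posSemidef.mpr
    (PosSemidef.diagonal fun i => ?_)) _
  rw [Pi.zero_apply, sub_nonneg, Function.comp_apply, Function.comp_apply, Function.comp_apply,
    RCLike.ofReal_le_ofReal]
  exact h _

theorem eigenvalues₀_conj_cfc_le {f : ℝ → ℝ} (hfc : ConcaveOn ℝ (Ici 0) f)
    (hfm : MonotoneOn f (Ici 0)) (hf0 : 0 ≤ f 0) {Z K : Matrix n n 𝕜} (hZ : 0 ≤ Z)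
    (hK : Kᴴ * K ≤ 1) (hX : (Kᴴ * cfc f Z * K).IsHermitian) (hY : (Kᴴ * Z * K).IsHermitian)
    (k : Fin (Fintype.card n)) : hX.eigenvalues₀ k ≤ f (hY.eigenvalues₀ k) := by
  have hZ' := nonneg_iff_posSemidef.mp hZ
  set b := hZ'.1.eigenvectorBasis
  have hμ : 0 ≤ hY.eigenvalues₀ k :=
    (isPositive_toEuclideanLin_iff.mpr (nonneg_iff_posSemidef.mp
      (star_left_conjugate_nonneg hZ K))).nonneg_eigenvalues finrank_euclideanSpace k
  have hXs := isSymmetric_toEuclideanLin_iff.mpr hX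
  refine hXs.eigenvalues_le_of_forall_inner_eigenvectorBasis_eq_zero finrank_euclideanSpace
    (isSymmetric_toEuclideanLin_iff.mpr hY) k _ fun x hx => ?_
  set y := toEuclideanLin K x
  have hquad : ∀ g : ℝ → ℝ, RCLike.re ⟪x, toEuclideanLin (Kᴴ * cfc g Z * K) x⟫_𝕜 =
      ∑ j, g (hZ'.1.eigenvalues j) * ‖⟪b j, y⟫_𝕜‖ ^ 2 := fun g => by
    rw [inner_toEuclideanLin_conjTranspose_mul_mul]
    exact (isSymmetric_toEuclideanLin_iff.mpr (cfc_predicate g Z).isHermitian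
      ).re_inner_apply_self_eq_sum b _ (hZ'.1.toEuclideanLin_cfc_eigenvectorBasis g) y
  have hmass : ∑ j, ‖⟪b j, y⟫_𝕜‖ ^ 2 ≤ ‖x‖ ^ 2 := by
    rw [b.sum_sq_norm_inner_right]
    exact pow_le_pow_left₀ (norm_nonneg _)
      (norm_toEuclideanLin_le_of_conjTranspose_mul_self_le_one hK x) 2
  have hmean : RCLike.re ⟪x, toEuclideanLin (Kᴴ * cfc (id : ℝ → ℝ) Z * K) x⟫_𝕜 ≤
      hY.eigenvalues₀ k * ‖x‖ ^ 2 := by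
    rw [cfc_id ℝ Z]
    exact (isSymmetric_toEuclideanLin_iff.mpr hY).re_inner_apply_self_le_eigenvalues_mul
      finrank_euclideanSpace k hx
  rw [hquad] at hmean
  rw [hquad]
  exact hfc.sum_mul_le_mul_of_sum_le hfm hf0 (fun _ => by positivity) hZ'.eigenvalues_nonneg
    hμ hmass hmean

-- `(√x)⁻¹` is `0` at `x = 0`, so `cfc (fun x => (√x)⁻¹) Z` is the pseudo-inverse of `Z^½`.
theorem conj_cfc_inv_sqrt_le_one {A Z : Matrix n n 𝕜} (hZ : 0 ≤ Z) (hAZ : A ≤ Z) :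
    cfc (fun x => (√x)⁻¹) Z * A * cfc (fun x => (√x)⁻¹) Z ≤ 1 := by
  have hS : star (cfc (fun x => (√x)⁻¹) Z) = cfc (fun x => (√x)⁻¹) Z := star_cfc _ Z
  calc cfc (fun x => (√x)⁻¹) Z * A * cfc (fun x => (√x)⁻¹) Z
      ≤ cfc (fun x => (√x)⁻¹) Z * Z * cfc (fun x => (√x)⁻¹) Z := by
        simpa only [hS] using star_left_conjugate_le_conjugate hAZ (cfc (fun x => (√x)⁻¹) Z)
    _ = cfc (fun x => (√x)⁻¹ * (x * (√x)⁻¹)) Z := by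
        rw [mul_assoc, self_mul_cfc _ hZ.isSelfAdjoint, cfc_mul_cfc]
    _ ≤ 1 := cfc_le_one _ Z fun x hx => by
        rw [mul_left_comm, ← mul_inv, Real.mul_self_sqrt (spectrum_nonneg_of_nonneg hZ hx)]
        exact mul_inv_le_one

theorem cfc_sqrt_mul_conj_cfc_inv_sqrt_mul_cfc_sqrt {A Z : Matrix n n 𝕜} (hA : 0 ≤ A)
    (hAZ : A ≤ Z) :
    cfc Real.sqrt Z * (cfc (fun x => (√x)⁻¹) Z * A * cfc (fun x => (√x)⁻¹) Z) *
      cfc Real.sqrt Z = A := by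
  have hZ := hA.trans hAZ
  set P : Matrix n n 𝕜 := cfc (fun x : ℝ => √x * (√x)⁻¹) Z
  have hP : star P = P := star_cfc _ Z
  have hZP : Z * (1 - P) = 0 := by
    rw [mul_sub, mul_one, self_mul_cfc _ hZ.isSelfAdjoint, sub_eq_zero]
    conv_lhs => rw [← cfc_id' ℝ Z]
    refine cfc_congr fun x hx => Eq.symm ?_
    rcases (spectrum_nonneg_of_nonneg hZ hx).eq_or_lt with rfl | hx0
    · simp
    · rw [mul_inv_cancel₀ (Real.sqrt_pos.mpr hx0).ne', mul_one]
  have hAP : A * P = A := by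
    have := mul_eq_zero_of_le_of_mul_eq_zero hA hAZ hZP
    rwa [mul_sub, mul_one, sub_eq_zero, eq_comm] at this
  have hPA : P * A = A := by
    simpa only [star_mul, hP, (IsSelfAdjoint.of_nonneg hA).star_eq] using congrArg star hAP
  calc cfc Real.sqrt Z * (cfc (fun x => (√x)⁻¹) Z * A * cfc (fun x => (√x)⁻¹) Z) *
        cfc Real.sqrt Z
      = cfc Real.sqrt Z * cfc (fun x => (√x)⁻¹) Z * A *
          (cfc (fun x => (√x)⁻¹) Z * cfc Real.sqrt Z) := by simp only [mul_assoc]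
    _ = P * A * P := by rw [← (cfc_commute_cfc Real.sqrt _ Z).eq, cfc_mul_cfc]
    _ = A := by rw [hPA, hAP]

theorem eigenvalues₀_conj_cfc_sqrt_le {f : ℝ → ℝ} (hfc : ConcaveOn ℝ (Ici 0) f)
    (hfm : MonotoneOn f (Ici 0)) (hf0 : 0 ≤ f 0) {Z C : Matrix n n 𝕜} (hZ : 0 ≤ Z) (hC : 0 ≤ C)
    (hC1 : C ≤ 1) (hX : (cfc (fun x => √(f x)) Z * C * cfc (fun x => √(f x)) Z).IsHermitian)
    (hY : (cfc Real.sqrt Z * C * cfc Real.sqrt Z).IsHermitian) (k : Fin (Fintype.card n)) :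
    hX.eigenvalues₀ k ≤ f (hY.eigenvalues₀ k) := by
  set R := cfc Real.sqrt C
  have hR : Rᴴ = R := star_cfc _ C
  have hRR : R * R = C := cfc_sqrt_mul_self hC
  have hFF : cfc (fun x => √(f x)) Z * cfc (fun x => √(f x)) Z = cfc f Z := by
    rw [cfc_mul_cfc]
    refine cfc_congr fun x hx => Real.mul_self_sqrt (hf0.trans ?_)
    have hx0 := spectrum_nonneg_of_nonneg hZ hx
    exact hfm self_mem_Ici hx0 hx0
  -- `H R R H` and `R H H R` are `M Mᴴ` and `Mᴴ M` for `M = H R`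
  have hswap : ∀ H : Matrix n n 𝕜, (H * (R * R) * H).charpoly = (R * (H * H) * R).charpoly :=
    fun H => by simpa only [mul_assoc] using charpoly_mul_comm (H * R) (R * H)
  rw [hX.eigenvalues₀_eq_of_charpoly_eq (isHermitian_conjTranspose_mul_mul R
      (cfc_predicate f Z).isHermitian) (by rw [hR, ← hRR, hswap, hFF]),
    hY.eigenvalues₀_eq_of_charpoly_eq (isHermitian_conjTranspose_mul_mul R
      (IsSelfAdjoint.of_nonneg hZ).isHermitian)
      (by rw [hR, ← hRR, hswap, cfc_sqrt_mul_self hZ])]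
  exact eigenvalues₀_conj_cfc_le hfc hfm hf0 hZ (by rwa [hR, hRR]) _ _ k

theorem exists_unitary_conj_cfc_sqrt_div_le {f : ℝ → ℝ} (hfc : ConcaveOn ℝ (Ici 0) f)
    (hfm : MonotoneOn f (Ici 0)) (hf0 : 0 ≤ f 0) {A Z : Matrix n n 𝕜} (hA : 0 ≤ A)
    (hAZ : A ≤ Z) :
    ∃ U ∈ unitaryGroup n 𝕜,
      cfc (fun x => √(f x / x)) Z * A * cfc (fun x => √(f x / x)) Z ≤ U * cfc f A * Uᴴ := by
  have hZ := hA.trans hAZ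
  set S := cfc (fun x : ℝ => (√x)⁻¹) Z
  set Fh := cfc (fun x => √(f x)) Z
  set C := S * A * S
  have hS : star S = S := star_cfc _ Z
  have hC : 0 ≤ C := by simpa only [hS] using star_left_conjugate_nonneg hA S
  have hG : cfc (fun x => √(f x / x)) Z = Fh * S := by
    rw [cfc_mul_cfc]
    exact cfc_congr fun x hx => by
      rw [Real.sqrt_div' _ (spectrum_nonneg_of_nonneg hZ hx), div_eq_mul_inv]
  have hG' : cfc (fun x => √(f x / x)) Z = S * Fh := hG.trans (cfc_commute_cfc _ _ Z).eq
  have hGAG : cfc (fun x => √(f x / x)) Z * A * cfc (fun x => √(f x / x)) Z = Fh * C * Fh := by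
    calc _ = Fh * S * A * (S * Fh) := by rw [← hG, ← hG']
      _ = Fh * C * Fh := by simp only [C, mul_assoc]
  have hX : (Fh * C * Fh).IsHermitian := (IsSelfAdjoint.of_nonneg (by
    simpa only [Fh, star_cfc] using star_left_conjugate_nonneg hC Fh)).isHermitian
  have hY : (cfc Real.sqrt Z * C * cfc Real.sqrt Z).IsHermitian := by
    rw [cfc_sqrt_mul_conj_cfc_inv_sqrt_mul_cfc_sqrt hA hAZ]
    exact (IsSelfAdjoint.of_nonneg hA).isHermitian
  have hA' : A.IsHermitian := (IsSelfAdjoint.of_nonneg hA).isHermitian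
  have hYA : hY.eigenvalues₀ = hA'.eigenvalues₀ := hY.eigenvalues₀_eq_of_charpoly_eq hA'
    (by rw [cfc_sqrt_mul_conj_cfc_inv_sqrt_mul_cfc_sqrt hA hAZ])
  rw [hGAG]
  refine hX.exists_unitary_le_conj_cfc hA' f fun k => ?_
  rw [← hYA]
  exact eigenvalues₀_conj_cfc_sqrt_le hfc hfm hf0 hZ hC (conj_cfc_inv_sqrt_le_one hZ hAZ) hX hY k

theorem exists_unitary_cfc_add_le {f : ℝ → ℝ} (hfc : ConcaveOn ℝ (Ici 0) f)
    (hfm : MonotoneOn f (Ici 0)) (hf0 : f 0 = 0) {A B : Matrix n n 𝕜} (hA : 0 ≤ A)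
    (hB : 0 ≤ B) :
    ∃ U ∈ unitaryGroup n 𝕜, ∃ V ∈ unitaryGroup n 𝕜,
      cfc f (A + B) ≤ U * cfc f A * Uᴴ + V * cfc f B * Vᴴ := by
  obtain ⟨U, hU, hAU⟩ := exists_unitary_conj_cfc_sqrt_div_le hfc hfm hf0.ge hA
    (le_add_of_nonneg_right hB)
  obtain ⟨V, hV, hBV⟩ := exists_unitary_conj_cfc_sqrt_div_le hfc hfm hf0.ge hB
    (le_add_of_nonneg_left hA)
  refine ⟨U, hU, V, hV, ?_⟩
  set G := cfc (fun x => √(f x / x)) (A + B)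
  have hAB : 0 ≤ A + B := add_nonneg hA hB
  calc cfc f (A + B) = G * (A + B) * G := by
        rw [mul_assoc, self_mul_cfc _ (IsSelfAdjoint.of_nonneg hAB), cfc_mul_cfc]
        refine cfc_congr fun x hx => ?_
        rcases (spectrum_nonneg_of_nonneg hAB hx).eq_or_lt with rfl | hx0
        · simp [hf0]
        · have hfx : 0 ≤ f x / x :=
            div_nonneg (hf0.symm.le.trans (hfm self_mem_Ici hx0.le hx0.le)) hx0.le
          rw [← mul_assoc, mul_comm, ← mul_assoc, Real.mul_self_sqrt hfx,
            div_mul_cancel₀ _ hx0.ne']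
    _ = G * A * G + G * B * G := by rw [mul_add, add_mul]
    _ ≤ U * cfc f A * Uᴴ + V * cfc f B * Vᴴ := add_le_add hAU hBV

end Matrix

/-- If `f : [0,∞) → [0,∞)` is concave and `A, B` are `n×n`
positive semidefinite complex matrices, then there exist unitaries `U, V` with
`f(A+B) ≤ U f(A) U* + V f(B) V*` in the Loewner order. -/
theorem concave_subadditive_unitary_orbits {n : ℕ} (f : ℝ → ℝ)
    (hf_nonneg : ∀ x ∈ Set.Ici (0:ℝ), 0 ≤ f x)
    (hf_concave : ConcaveOn ℝ (Set.Ici 0) f)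
    (A B : Matrix (Fin n) (Fin n) ℂ)
    (hA : A.PosSemidef) (hB : B.PosSemidef) :
    ∃ U V : Matrix (Fin n) (Fin n) ℂ,
      U ∈ Matrix.unitaryGroup (Fin n) ℂ ∧ V ∈ Matrix.unitaryGroup (Fin n) ℂ ∧
      (U * cfc f A * Uᴴ + V * cfc f B * Vᴴ - cfc f (A + B)).PosSemidef := by
  have hfm := hf_concave.monotoneOn_of_forall_le hf_nonneg
  obtain ⟨U, hU, V, hV, hle⟩ := Matrix.exists_unitary_cfc_add_le (f := fun x => f x - f 0)
    (hf_concave.sub (convexOn_const (f 0) (convex_Ici 0)))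
    (fun x hx y hy hxy => sub_le_sub_right (hfm hx hy hxy) _) (sub_self _) hA.nonneg hB.nonneg
  refine ⟨U, V, hU, hV, Matrix.le_iff.mp ?_⟩
  set c := algebraMap ℝ (Matrix (Fin n) (Fin n) ℂ) (f 0)
  have hcfc : ∀ X : Matrix (Fin n) (Fin n) ℂ, 0 ≤ X → cfc f X = cfc (fun x => f x - f 0) X + c :=
    fun X hX => by
      rw [← cfc_add_const _ _ X (X.finite_real_spectrum.continuousOn _)
        (IsSelfAdjoint.of_nonneg hX)]
      simp
  have hconj : ∀ W ∈ Matrix.unitaryGroup (Fin n) ℂ, W * c * Wᴴ = c := fun W hW => by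
    rw [← Algebra.commutes, mul_assoc, ← Matrix.star_eq_conjTranspose,
      Matrix.mem_unitaryGroup_iff.mp hW, mul_one]
  have hc : 0 ≤ c := algebraMap_nonneg _ (hf_nonneg 0 Set.self_mem_Ici)
  rw [hcfc A hA.nonneg, hcfc B hB.nonneg, hcfc (A + B) (add_nonneg hA.nonneg hB.nonneg), mul_add,
    add_mul, mul_add, add_mul, hconj U hU, hconj V hV, add_add_add_comm]
  exact add_le_add hle (le_add_of_nonneg_left hc)
end

section
/- Let g : [0,∞) → [0,∞) be a convex function with g(0) = 0 and let A, B be n×n positive semidefinite complex matrices. Then det(g(A+B))^{1/n} ≥ det(g(A))^{1/n} + det(g(B))^{1/n}. -/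
/-!
Write `λ₀ ≥ λ₁ ≥ …` for the eigenvalues of a Hermitian matrix, so that `det g(M) = ∏ₖ g(λₖ(M))`.
Three facts combine:
* Weyl monotonicity `λₖ(A) ≤ λₖ(A + B)`, by the min–max argument: the span of the top `k + 1`
  eigenvectors of `A` meets the span of the bottom `n - k` eigenvectors of `A + B`.
* Minkowski's determinant inequality `det(A)^{1/n} + det(B)^{1/n} ≤ det(A + B)^{1/n}`: writing
  `A = S* S` and `B = S* C S`, it becomes `1 + (∏ γᵢ)^{1/n} ≤ (∏ (1 + γᵢ))^{1/n}` for the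
  eigenvalues `γᵢ ≥ 0` of `C`, which is AM–GM applied to `1/(1 + γᵢ)` and `γᵢ/(1 + γᵢ)`.
* Since `g` is convex with `g 0 = 0`, `g(x)/x` is nondecreasing, so Weyl gives
  `det g(A) / det A ≤ det g(A + B) / det(A + B)`, and likewise for `B`.
Multiplying Minkowski's inequality by `(det g(A + B) / det(A + B))^{1/n}` gives the claim.
-/

open scoped Matrix ComplexOrder InnerProductSpace
open Module RCLike

lemma ConvexOn.mul_apply_le_mul_apply_of_map_zero {g : ℝ → ℝ} (hg : ConvexOn ℝ (Set.Ici 0) g)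
    (hg0 : g 0 = 0) {x y : ℝ} (hx : 0 ≤ x) (hxy : x ≤ y) : y * g x ≤ x * g y := by
  rcases hx.eq_or_lt with rfl | hx
  · simp [hg0]
  rcases hxy.eq_or_lt with rfl | hxy
  · exact le_rfl
  simpa [hg0] using hg.secant_mono_aux1 Set.self_mem_Ici (hx.trans hxy).le hx hxy

namespace Real

open Finset

lemma one_add_prod_rpow_le {ι : Type*} [Fintype ι] [Nonempty ι] {γ : ι → ℝ}
    (hγ : ∀ i, 0 ≤ γ i) :
    1 + (∏ i, γ i) ^ (1 / Fintype.card ι : ℝ) ≤ (∏ i, (1 + γ i)) ^ (1 / Fintype.card ι : ℝ) := by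
  set w : ℝ := 1 / Fintype.card ι
  have hw : ∑ _i : ι, w = 1 := by simp [w]
  have hpos (i : ι) : 0 < 1 + γ i := by linarith [hγ i]
  have amgm (z : ι → ℝ) (hz : ∀ i, 0 ≤ z i) : ∏ i, z i ^ w ≤ ∑ i, w * z i :=
    geom_mean_le_arith_mean_weighted univ _ _ (fun _ _ ↦ by positivity) hw fun i _ ↦ hz i
  have h₁ := amgm (fun i ↦ (1 + γ i)⁻¹) fun i ↦ (inv_pos.mpr (hpos i)).le
  have h₂ := amgm (fun i ↦ γ i / (1 + γ i)) fun i ↦ div_nonneg (hγ i) (hpos i).le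
  have hP : 0 < ∏ i, (1 + γ i) := prod_pos fun i _ ↦ hpos i
  rw [finsetProd_rpow _ _ (fun i _ ↦ (inv_pos.mpr (hpos i)).le), prod_inv_distrib,
    inv_rpow hP.le] at h₁
  rw [finsetProd_rpow _ _ (fun i _ ↦ div_nonneg (hγ i) (hpos i).le), prod_div_distrib,
    div_rpow (prod_nonneg fun i _ ↦ hγ i) hP.le] at h₂
  have hsum : ∑ i, w * (1 + γ i)⁻¹ + ∑ i, w * (γ i / (1 + γ i)) = 1 := by
    rw [← sum_add_distrib]
    refine (sum_congr rfl fun i _ ↦ ?_).trans hw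
    field_simp [(hpos i).ne']
  rw [← div_le_one (rpow_pos_of_pos hP w), add_div, one_div]
  linarith

theorem prod_apply_rpow_add_le_of_convexOn {ι : Type*} [Fintype ι] {g : ℝ → ℝ}
    (hg_nonneg : ∀ x ∈ Set.Ici (0 : ℝ), 0 ≤ g x) (hg : ConvexOn ℝ (Set.Ici 0) g) (hg0 : g 0 = 0)
    {α β γ : ι → ℝ} (hα : ∀ i, 0 ≤ α i) (hβ : ∀ i, 0 ≤ β i) (hαγ : ∀ i, α i ≤ γ i)
    (hβγ : ∀ i, β i ≤ γ i) {w : ℝ} (hw : 0 < w)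
    (h : (∏ i, α i) ^ w + (∏ i, β i) ^ w ≤ (∏ i, γ i) ^ w) :
    (∏ i, g (α i)) ^ w + (∏ i, g (β i)) ^ w ≤ (∏ i, g (γ i)) ^ w := by
  have hγ i : 0 ≤ γ i := (hα i).trans (hαγ i)
  have hgγ : 0 ≤ ∏ i, g (γ i) := prod_nonneg fun i _ ↦ hg_nonneg _ (hγ i)
  rcases (prod_nonneg fun i _ ↦ hγ i : 0 ≤ ∏ i, γ i).eq_or_lt with hΓ | hΓ
  · obtain ⟨i, -, hi⟩ := prod_eq_zero_iff.mp hΓ.symm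
    have hvanish {δ : ι → ℝ} (hδ : ∀ i, 0 ≤ δ i) (hδγ : ∀ i, δ i ≤ γ i) : ∏ i, g (δ i) = 0 :=
      prod_eq_zero (mem_univ i) (by rw [le_antisymm (hi ▸ hδγ i) (hδ i), hg0])
    rw [hvanish hα hαγ, hvanish hβ hβγ, zero_rpow hw.ne', add_zero]
    exact rpow_nonneg hgγ w
  have hratio {δ : ι → ℝ} (hδ : ∀ i, 0 ≤ δ i) (hδγ : ∀ i, δ i ≤ γ i) :
      (∏ i, γ i) ^ w * (∏ i, g (δ i)) ^ w ≤ (∏ i, δ i) ^ w * (∏ i, g (γ i)) ^ w := by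
    rw [← mul_rpow hΓ.le (prod_nonneg fun i _ ↦ hg_nonneg _ (hδ i)),
      ← mul_rpow (prod_nonneg fun i _ ↦ hδ i) hgγ, ← prod_mul_distrib, ← prod_mul_distrib]
    have hnonneg i : 0 ≤ γ i * g (δ i) := mul_nonneg (hγ i) (hg_nonneg _ (hδ i))
    exact rpow_le_rpow (prod_nonneg fun i _ ↦ hnonneg i) (prod_le_prod (fun i _ ↦ hnonneg i)
      fun i _ ↦ hg.mul_apply_le_mul_apply_of_map_zero hg0 (hδ i) (hδγ i)) hw.le
  refine le_of_mul_le_mul_left ?_ (rpow_pos_of_pos hΓ w)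
  calc (∏ i, γ i) ^ w * ((∏ i, g (α i)) ^ w + (∏ i, g (β i)) ^ w)
      ≤ ((∏ i, α i) ^ w + (∏ i, β i) ^ w) * (∏ i, g (γ i)) ^ w := by
        linarith [hratio hα hαγ, hratio hβ hβγ]
    _ ≤ (∏ i, γ i) ^ w * (∏ i, g (γ i)) ^ w := by gcongr

end Real

lemma Submodule.inf_ne_bot_of_finrank_lt_add {K V : Type*} [DivisionRing K] [AddCommGroup V]
    [Module K V] [FiniteDimensional K V] {S T : Submodule K V}
    (h : finrank K V < finrank K S + finrank K T) : S ⊓ T ≠ ⊥ := by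
  intro hST
  have := Submodule.finrank_sup_add_finrank_inf_eq S T
  rw [hST, finrank_bot] at this
  have := (S ⊔ T).finrank_le
  omega

namespace OrthonormalBasis

variable {𝕜 E ι : Type*} [RCLike 𝕜] [NormedAddCommGroup E] [InnerProductSpace 𝕜 E] [Fintype ι]

lemma repr_apply_eq_zero_of_mem_span (b : OrthonormalBasis ι 𝕜 E) {s : Set ι} {x : E}
    (hx : x ∈ Submodule.span 𝕜 (b '' s)) {i : ι} (hi : i ∉ s) : b.repr x i = 0 := by
  rw [b.repr_apply_apply]
  refine Submodule.span_induction ?_ (by simp)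
    (fun _ _ _ _ h₁ h₂ ↦ by simp [inner_add_right, h₁, h₂])
    (fun _ _ _ h ↦ by simp [inner_smul_right, h]) hx
  rintro _ ⟨j, hj, rfl⟩
  exact b.orthonormal.2 (ne_of_mem_of_not_mem hj hi).symm

lemma finrank_span_image (b : OrthonormalBasis ι 𝕜 E) (s : Finset ι) :
    finrank 𝕜 (Submodule.span 𝕜 (b '' s)) = s.card := by
  rw [Set.image_eq_range]
  exact (finrank_span_eq_card
    (b.orthonormal.linearIndependent.comp _ Subtype.val_injective)).trans (by simp)

end OrthonormalBasis

namespace LinearMap.IsSymmetric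

variable {𝕜 E : Type*} [RCLike 𝕜] [NormedAddCommGroup E] [InnerProductSpace 𝕜 E]
  [FiniteDimensional 𝕜 E] {n : ℕ} {T S : E →ₗ[𝕜] E}

lemma re_inner_apply_eq_sum (hT : T.IsSymmetric) (hn : finrank 𝕜 E = n) (x : E) :
    re ⟪x, T x⟫_𝕜 = ∑ i, hT.eigenvalues hn i * ‖(hT.eigenvectorBasis hn).repr x i‖ ^ 2 := by
  rw [← (hT.eigenvectorBasis hn).repr.inner_map_map, PiLp.inner_apply, map_sum]
  refine Finset.sum_congr rfl fun i _ ↦ ?_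
  rw [eigenvectorBasis_apply_self_apply, ← smul_eq_mul, inner_smul_right,
    inner_self_eq_norm_sq_to_K]
  norm_cast

lemma re_inner_apply_sub_eq_sum_of_mem_span (hT : T.IsSymmetric) (hn : finrank 𝕜 E = n)
    (r : ℝ) {s : Finset (Fin n)} {x : E}
    (hx : x ∈ Submodule.span 𝕜 (hT.eigenvectorBasis hn '' s)) :
    re ⟪x, T x⟫_𝕜 - r * ‖x‖ ^ 2 =
      ∑ i ∈ s, (hT.eigenvalues hn i - r) * ‖(hT.eigenvectorBasis hn).repr x i‖ ^ 2 := by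
  rw [re_inner_apply_eq_sum, ← (hT.eigenvectorBasis hn).repr.norm_map, EuclideanSpace.norm_sq_eq,
    Finset.mul_sum, ← Finset.sum_sub_distrib]
  simp_rw [← sub_mul]
  refine (Finset.sum_subset (Finset.subset_univ s) fun i _ hi ↦ ?_).symm
  simp [OrthonormalBasis.repr_apply_eq_zero_of_mem_span _ hx (Finset.mem_coe.not.mpr hi)]

theorem eigenvalues_le_of_isPositive_sub (hT : T.IsSymmetric) (hS : S.IsSymmetric)
    (hn : finrank 𝕜 E = n) (hST : (S - T).IsPositive) (k : Fin n) :
    hT.eigenvalues hn k ≤ hS.eigenvalues hn k := by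
  have hdim : finrank 𝕜 E < (Finset.Iic k).card + (Finset.Ici k).card := by
    rw [Fin.card_Iic, Fin.card_Ici]; omega
  rw [← (hT.eigenvectorBasis hn).finrank_span_image,
    ← (hS.eigenvectorBasis hn).finrank_span_image] at hdim
  obtain ⟨x, ⟨hxT, hxS⟩, hx⟩ := Submodule.exists_mem_ne_zero_of_ne_bot
    (Submodule.inf_ne_bot_of_finrank_lt_add hdim)
  have hT_ge : 0 ≤ re ⟪x, T x⟫_𝕜 - hT.eigenvalues hn k * ‖x‖ ^ 2 := by
    rw [re_inner_apply_sub_eq_sum_of_mem_span hT hn _ hxT]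
    exact Finset.sum_nonneg fun i hi ↦ mul_nonneg
      (sub_nonneg.mpr (hT.eigenvalues_antitone hn (Finset.mem_Iic.mp hi))) (by positivity)
  have hS_le : re ⟪x, S x⟫_𝕜 - hS.eigenvalues hn k * ‖x‖ ^ 2 ≤ 0 := by
    rw [re_inner_apply_sub_eq_sum_of_mem_span hS hn _ hxS]
    exact Finset.sum_nonpos fun i hi ↦ mul_nonpos_of_nonpos_of_nonneg
      (sub_nonpos.mpr (hS.eigenvalues_antitone hn (Finset.mem_Ici.mp hi))) (by positivity)
  have hTS : re ⟪x, T x⟫_𝕜 ≤ re ⟪x, S x⟫_𝕜 := by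
    have := hST.2 x
    rwa [sub_apply, inner_sub_left, map_sub, sub_nonneg, hS, hT] at this
  have hx2 : 0 < ‖x‖ ^ 2 := by positivity
  nlinarith

end LinearMap.IsSymmetric

namespace Matrix

variable {𝕜 n : Type*} [RCLike 𝕜] [Fintype n] [DecidableEq n] {A B : Matrix n n 𝕜}

namespace IsHermitian

theorem eigenvalues₀_le_of_posSemidef_sub (hA : A.IsHermitian) (hB : B.IsHermitian)
    (hAB : (B - A).PosSemidef) (k : Fin (Fintype.card n)) :
    hA.eigenvalues₀ k ≤ hB.eigenvalues₀ k :=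
  LinearMap.IsSymmetric.eigenvalues_le_of_isPositive_sub _ _ _
    (by rwa [← map_sub, isPositive_toEuclideanLin_iff]) k

lemma prod_eigenvalues₀ (hA : A.IsHermitian) (f : ℝ → ℝ) :
    ∏ k, f (hA.eigenvalues₀ k) = ∏ i, f (hA.eigenvalues i) :=
  ((Fintype.equivOfCardEq (Fintype.card_fin _)).symm.prod_comp _).symm

lemma det_cfc (hA : A.IsHermitian) (f : ℝ → ℝ) :
    (cfc f A).det = ∏ i, (f (hA.eigenvalues i) : 𝕜) := by
  simp [hA.cfc_eq, IsHermitian.cfc, -Unitary.conjStarAlgAut_apply]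

lemma re_det_cfc (hA : A.IsHermitian) (f : ℝ → ℝ) :
    re (cfc f A).det = ∏ k, f (hA.eigenvalues₀ k) := by
  rw [hA.det_cfc, ← ofReal_prod, ofReal_re, prod_eigenvalues₀]

lemma re_det_eq_prod_eigenvalues₀ (hA : A.IsHermitian) : re A.det = ∏ k, hA.eigenvalues₀ k := by
  simpa [cfc_id ℝ A hA.isSelfAdjoint] using hA.re_det_cfc id

end IsHermitian

namespace PosSemidef

lemma eigenvalues₀_nonneg (hA : A.PosSemidef) (k : Fin (Fintype.card n)) :
    0 ≤ hA.1.eigenvalues₀ k := by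
  simpa [IsHermitian.eigenvalues] using
    hA.eigenvalues_nonneg (Fintype.equivOfCardEq (Fintype.card_fin _) k)

lemma re_det_nonneg (hA : A.PosSemidef) : 0 ≤ re A.det :=
  (RCLike.nonneg_iff.mp hA.det_nonneg).1

lemma re_det_le_of_posSemidef_sub (hA : A.PosSemidef) (hAB : (B - A).PosSemidef) :
    re A.det ≤ re B.det := by
  have hB : B.PosSemidef := by simpa using hA.add hAB
  rw [hA.1.re_det_eq_prod_eigenvalues₀, hB.1.re_det_eq_prod_eigenvalues₀]
  exact Finset.prod_le_prod (fun k _ ↦ hA.eigenvalues₀_nonneg k)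
    (fun k _ ↦ hA.1.eigenvalues₀_le_of_posSemidef_sub hB.1 hAB k)

end PosSemidef

open scoped MatrixOrder in
lemma PosDef.exists_posSemidef_det_add_eq (hA : A.PosDef) (hB : B.PosSemidef) :
    ∃ C : Matrix n n 𝕜, C.PosSemidef ∧ (A + B).det = A.det * (1 + C).det ∧
      B.det = A.det * C.det := by
  obtain ⟨S, rfl⟩ := CStarAlgebra.nonneg_iff_eq_star_mul_self.mp hA.posSemidef.nonneg
  rw [star_eq_conjTranspose] at hA ⊢
  have hS : IsUnit S.det := by
    refine isUnit_iff_ne_zero.mpr fun h ↦ hA.det_pos.ne' ?_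
    rw [det_mul, h, mul_zero]
  have hSinv : Sᴴ * (S⁻¹)ᴴ = 1 := by
    rw [← conjTranspose_mul, nonsing_inv_mul _ hS, conjTranspose_one]
  have hcongr (X : Matrix n n 𝕜) : (Sᴴ * X * S).det = (Sᴴ * S).det * X.det := by
    simp only [det_mul]; ring
  set C := (S⁻¹)ᴴ * B * S⁻¹
  have hBC : B = Sᴴ * C * S := by
    simp only [C, Matrix.mul_assoc, nonsing_inv_mul _ hS, Matrix.mul_one]
    rw [← Matrix.mul_assoc, hSinv, Matrix.one_mul]
  refine ⟨C, hB.conjTranspose_mul_mul_same _, ?_, by rw [hBC, hcongr]⟩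
  rw [← hcongr, Matrix.mul_add, Matrix.add_mul, Matrix.mul_one, ← hBC]

theorem PosSemidef.re_det_rpow_add_le [Nonempty n] (hA : A.PosSemidef) (hB : B.PosSemidef) :
    re A.det ^ (1 / Fintype.card n : ℝ) + re B.det ^ (1 / Fintype.card n : ℝ) ≤
      re (A + B).det ^ (1 / Fintype.card n : ℝ) := by
  set w : ℝ := 1 / Fintype.card n
  by_cases hdet : A.det = 0
  · rw [hdet, map_zero, Real.zero_rpow (by simp [w]), zero_add]
    exact Real.rpow_le_rpow hB.re_det_nonneg
      (hB.re_det_le_of_posSemidef_sub (by simpa using hA)) (by positivity)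
  obtain ⟨C, hC, hAB, hBC⟩ :=
    ((hA.posDef_iff_det_ne_zero).mpr hdet).exists_posSemidef_det_add_eq hB
  have ha : A.det = (re A.det : 𝕜) := by
    rw [hA.1.det_eq_prod_eigenvalues, ← ofReal_prod, ofReal_re]
  set a := re A.det
  have ha0 : 0 ≤ a := hA.re_det_nonneg
  have h1C : re (1 + C).det = ∏ k, (1 + hC.1.eigenvalues₀ k) := by
    have h : cfc (fun x : ℝ ↦ 1 + x) C = 1 + C := by
      rw [cfc_const_add 1 (fun x : ℝ ↦ x) C continuousOn_id hC.1.isSelfAdjoint,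
        cfc_id' ℝ C hC.1.isSelfAdjoint, map_one]
    rw [← h, hC.1.re_det_cfc]
  have hγ := Real.one_add_prod_rpow_le hC.eigenvalues₀_nonneg
  rw [Fintype.card_fin] at hγ
  rw [hAB, hBC, ha, re_ofReal_mul, re_ofReal_mul, h1C, hC.1.re_det_eq_prod_eigenvalues₀,
    Real.mul_rpow ha0 (Finset.prod_nonneg fun k _ ↦ hC.eigenvalues₀_nonneg k),
    Real.mul_rpow ha0 (Finset.prod_nonneg fun k _ ↦ by linarith [hC.eigenvalues₀_nonneg k])]
  calc _ = a ^ w * (1 + (∏ k, hC.1.eigenvalues₀ k) ^ w) := by ring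
    _ ≤ _ := by gcongr

end Matrix

/-- If `g : [0,∞) → [0,∞)` is convex with `g(0) = 0`, then for all `n×n`
positive semidefinite complex matrices `A, B` (`n ≥ 1`),
`det(g(A+B))^{1/n} ≥ det(g(A))^{1/n} + det(g(B))^{1/n}`. -/
theorem det_root_convex_superadditive {n : ℕ} (hn : 0 < n) (g : ℝ → ℝ)
    (hg_nonneg : ∀ x ∈ Set.Ici (0:ℝ), 0 ≤ g x)
    (hg_convex : ConvexOn ℝ (Set.Ici 0) g)
    (hg0 : g 0 = 0)
    (A B : Matrix (Fin n) (Fin n) ℂ)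
    (hA : A.PosSemidef) (hB : B.PosSemidef) :
    (cfc g A).det.re ^ (1 / (n:ℝ)) + (cfc g B).det.re ^ (1 / (n:ℝ)) ≤
      (cfc g (A + B)).det.re ^ (1 / (n:ℝ)) := by
  have : Nonempty (Fin n) := ⟨⟨0, hn⟩⟩
  have hAB := hA.add hB
  have hdet {M : Matrix (Fin n) (Fin n) ℂ} (hM : M.PosSemidef) :
      (cfc g M).det.re = ∏ k, g (hM.1.eigenvalues₀ k) :=
    hM.1.re_det_cfc g
  have hmink := hA.re_det_rpow_add_le hB
  rw [Fintype.card_fin, hA.1.re_det_eq_prod_eigenvalues₀, hB.1.re_det_eq_prod_eigenvalues₀,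
    hAB.1.re_det_eq_prod_eigenvalues₀] at hmink
  rw [hdet hA, hdet hB, hdet hAB]
  exact Real.prod_apply_rpow_add_le_of_convexOn hg_nonneg hg_convex hg0 hA.eigenvalues₀_nonneg
    hB.eigenvalues₀_nonneg
    (hA.1.eigenvalues₀_le_of_posSemidef_sub hAB.1 (by simpa using hB))
    (hB.1.eigenvalues₀_le_of_posSemidef_sub hAB.1 (by simpa using hA)) (by positivity) hmink
end

section
/- Let f : [0,∞) → [0,∞) be a concave function and let A = [a_{ij}] be an m×m positive semidefinite complex matrix. Then there exist rank-one orthogonal projections E_1, …, E_m ∈ M_m(ℂ) such that f(A) ≤ ∑_{i=1}^m f(a_{ii}) E_i in the Loewner order. -/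
/-!
Let `C = [c_{ij}] = f(A)`, which is positive semidefinite because `f ≥ 0` on the spectrum of `A`,
and let `B = C^{1/2}` with columns `b_i`. Since `B` is Hermitian, `C = B Bᴴ = ∑ i, b_i b_iᴴ` and
`c_{ii} = (Bᴴ B)_{ii} = ‖b_i‖²`. Writing `A = U diag(λ) Uᴴ`, the diagonal entries are averages
`c_{ii} = ∑ j, |u_{ij}|² f(λ_j)` and `a_{ii} = ∑ j, |u_{ij}|² λ_j`, so Jensen's inequality for the
concave `f` gives `‖b_i‖² ≤ f(a_{ii})`. With `E_i` the projection onto `b_i` (any unit vector if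
`b_i = 0`) we get `b_i b_iᴴ = ‖b_i‖² E_i ≤ f(a_{ii}) E_i`, and summing over `i` proves the claim.
-/

open scoped Matrix ComplexOrder MatrixOrder

namespace Matrix

section Rank

variable {K m n : Type*} [Field K] [Fintype n]

theorem rank_eq_zero_iff {A : Matrix m n K} : A.rank = 0 ↔ A = 0 := by
  classical
  rw [rank, Submodule.finrank_eq_zero, LinearMap.range_eq_bot, ← toLin'_apply',
    map_eq_zero_iff _ toLin'.injective]

theorem rank_vecMulVec_of_ne_zero {w : m → K} {v : n → K} (hw : w ≠ 0) (hv : v ≠ 0) :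
    (vecMulVec w v).rank = 1 := by
  refine le_antisymm (rank_vecMulVec_le w v) (Nat.one_le_iff_ne_zero.mpr ?_)
  obtain ⟨i, hi⟩ := Function.ne_iff.mp hw
  obtain ⟨j, hj⟩ := Function.ne_iff.mp hv
  rw [Ne, rank_eq_zero_iff]
  exact fun h => mul_ne_zero hi hj (congrFun₂ h i j)

end Rank

theorem vecMulVec_mul_self_of_dotProduct_eq_one {R n : Type*} [Semiring R] [Fintype n]
    {u v : n → R} (h : v ⬝ᵥ u = 1) : vecMulVec u v * vecMulVec u v = vecMulVec u v := by
  rw [vecMulVec_mul_vecMulVec, h, one_smul]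

theorem mul_conjTranspose_eq_sum_vecMulVec {R n : Type*} [Semiring R] [StarRing R] [Fintype n]
    (B : Matrix n n R) : B * Bᴴ = ∑ i, vecMulVec (Bᵀ i) (star (Bᵀ i)) := by
  ext a b
  simp [mul_apply, sum_apply, vecMulVec_apply]

variable {𝕜 n : Type*} [RCLike 𝕜] [Fintype n]

theorem dotProduct_star_self_eq_ofReal_re (b : n → 𝕜) :
    star b ⬝ᵥ b = (RCLike.re (star b ⬝ᵥ b) : 𝕜) := by
  obtain ⟨x, -, hx⟩ := RCLike.nonneg_iff_exists_ofReal.mp (dotProduct_star_self_nonneg b)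
  rw [← hx, RCLike.ofReal_re]

theorem exists_vecMulVec_star_self_eq_smul [DecidableEq n] [Nonempty n] (b : n → 𝕜) :
    ∃ v : n → 𝕜, star v ⬝ᵥ v = 1 ∧
      vecMulVec b (star b) = RCLike.re (star b ⬝ᵥ b) • vecMulVec v (star v) := by
  by_cases hb : b = 0
  · exact ⟨Pi.single (Classical.arbitrary n) 1, by simp, by simp [hb]⟩
  set r := RCLike.re (star b ⬝ᵥ b)
  have hr : 0 < r := by
    have := dotProduct_star_self_pos_iff.mpr hb
    rw [dotProduct_star_self_eq_ofReal_re] at this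
    exact_mod_cast this
  have hs : (√r)⁻¹ * (√r)⁻¹ = r⁻¹ := by rw [← mul_inv, Real.mul_self_sqrt hr.le]
  refine ⟨(√r)⁻¹ • b, ?_, ?_⟩
  · simp only [star_smul, star_trivial, smul_dotProduct, dotProduct_smul, smul_smul, hs]
    rw [dotProduct_star_self_eq_ofReal_re, RCLike.real_smul_eq_coe_mul, ← RCLike.ofReal_mul,
      inv_mul_cancel₀ hr.ne', RCLike.ofReal_one]
  · simp only [star_smul, star_trivial, smul_vecMulVec, vecMulVec_smul, smul_smul, hs]
    rw [mul_inv_cancel₀ hr.ne', one_smul]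

theorem PosSemidef.exists_sub_sum_smul_vecMulVec_posSemidef [DecidableEq n] {C : Matrix n n 𝕜}
    (hC : C.PosSemidef) {c : n → ℝ} (hc : ∀ i, RCLike.re (C i i) ≤ c i) :
    ∃ v : n → n → 𝕜, (∀ i, star (v i) ⬝ᵥ v i = 1) ∧
      (∑ i, c i • vecMulVec (v i) (star (v i)) - C).PosSemidef := by
  set B := CFC.sqrt C
  have hB : Bᴴ = B := (CFC.sqrt_nonneg C).isSelfAdjoint
  have hBB : B * B = C := CFC.sqrt_mul_sqrt_self C hC.nonneg
  have hdiag : ∀ i, C i i = star (Bᵀ i) ⬝ᵥ Bᵀ i := fun i => by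
    rw [← hBB]; nth_rw 1 [← hB]; rfl
  choose v hv hBv using fun i => haveI : Nonempty n := ⟨i⟩
    exists_vecMulVec_star_self_eq_smul (Bᵀ i)
  refine ⟨v, hv, ?_⟩
  rw [← hBB]; nth_rw 2 [← hB]
  rw [mul_conjTranspose_eq_sum_vecMulVec, ← Finset.sum_sub_distrib]
  refine posSemidef_sum _ fun i _ => ?_
  rw [hBv, ← sub_smul, ← hdiag]
  exact (posSemidef_vecMulVec_self_star (v i)).smul (sub_nonneg.mpr (hc i))

theorem sum_norm_sq_apply_eq_one_of_mem_unitaryGroup [DecidableEq n] {U : Matrix n n 𝕜}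
    (hU : U ∈ unitaryGroup n 𝕜) (i : n) : ∑ j, ‖U i j‖ ^ 2 = 1 := by
  have := congrFun₂ (mem_unitaryGroup_iff.mp hU) i i
  simp only [mul_apply, star_apply, RCLike.star_def, RCLike.mul_conj, one_apply_eq] at this
  exact_mod_cast this

theorem IsHermitian.re_cfc_apply_self [DecidableEq n] {A : Matrix n n 𝕜} (hA : A.IsHermitian)
    (f : ℝ → ℝ) (i : n) :
    RCLike.re (cfc f A i i) =
      ∑ j, ‖(hA.eigenvectorUnitary : Matrix n n 𝕜) i j‖ ^ 2 * f (hA.eigenvalues j) := by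
  rw [hA.cfc_eq, IsHermitian.cfc, Unitary.conjStarAlgAut_apply, mul_apply, map_sum]
  refine Finset.sum_congr rfl fun j _ => ?_
  rw [mul_diagonal, star_apply, RCLike.star_def, mul_right_comm, RCLike.mul_conj]
  norm_cast
  simp [mul_comm]

theorem PosSemidef.re_cfc_apply_self_le [DecidableEq n] {A : Matrix n n 𝕜} (hA : A.PosSemidef)
    {f : ℝ → ℝ} (hf : ConcaveOn ℝ (Set.Ici 0) f) (i : n) :
    RCLike.re (cfc f A i i) ≤ f (RCLike.re (A i i)) := by
  have hid := hA.isHermitian.re_cfc_apply_self id i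
  rw [cfc_id ℝ A] at hid
  rw [hA.isHermitian.re_cfc_apply_self, hid]
  simpa only [smul_eq_mul, id_eq] using hf.le_map_sum (fun j _ => sq_nonneg _)
    (sum_norm_sq_apply_eq_one_of_mem_unitaryGroup hA.isHermitian.eigenvectorUnitary.2 i)
    (fun j _ => hA.eigenvalues_nonneg j)

end Matrix

open Matrix

/-- If `f : [0,∞) → [0,∞)` is concave and `A = [a_{ij}]` is an `m×m`
positive semidefinite complex matrix, then there exist rank-one orthogonal projections
`E_1, …, E_m` with `f(A) ≤ ∑ i, f(a_{ii}) E_i` in the Loewner order. -/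
theorem concave_diagonal_rank_one_projections {m : ℕ} (f : ℝ → ℝ)
    (hf_nonneg : ∀ x ∈ Set.Ici (0:ℝ), 0 ≤ f x)
    (hf_concave : ConcaveOn ℝ (Set.Ici 0) f)
    (A : Matrix (Fin m) (Fin m) ℂ) (hA : A.PosSemidef) :
    ∃ E : Fin m → Matrix (Fin m) (Fin m) ℂ,
      (∀ i, (E i)ᴴ = E i) ∧ (∀ i, E i * E i = E i) ∧ (∀ i, (E i).rank = 1) ∧
      ((∑ i, f ((A i i).re) • E i) - cfc f A).PosSemidef := by
  have hfA : (cfc f A).PosSemidef := nonneg_iff_posSemidef.mp <|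
    cfc_nonneg fun x hx => hf_nonneg x (spectrum_nonneg_of_nonneg hA.nonneg hx)
  obtain ⟨v, hv, hle⟩ :=
    hfA.exists_sub_sum_smul_vecMulVec_posSemidef (hA.re_cfc_apply_self_le hf_concave)
  have hv0 : ∀ i, v i ≠ 0 := fun i h => by simpa [h] using hv i
  refine ⟨fun i => vecMulVec (v i) (star (v i)), fun i => (posSemidef_vecMulVec_self_star _).1,
    fun i => vecMulVec_mul_self_of_dotProduct_eq_one (hv i),
    fun i => rank_vecMulVec_of_ne_zero (hv0 i) (star_ne_zero.mpr (hv0 i)), hle⟩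
end

section
/- Let H = [[A, X],[X*, B]] be an (n+m)×(n+m) positive semidefinite complex matrix written in blocks with A ∈ M_n(ℂ) and B ∈ M_m(ℂ). Then there exist unitary matrices U, V ∈ M_{n+m}(ℂ) such that H = U (A ⊕ 0_m) U* + V (0_n ⊕ B) V*, where A ⊕ 0_m and 0_n ⊕ B denote the (n+m)×(n+m) matrices with the indicated diagonal blocks and zeros elsewhere. -/
/-!
Write `H = M * M` with `M = √H` Hermitian and let `P`, `Q` be the coordinate projections onto
the two blocks. Then `H = M (P Pᴴ + Q Qᴴ) M = (M P)(M P)ᴴ + (M Q)(M Q)ᴴ`, while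
`(M P)ᴴ (M P) = Pᴴ H P = A ⊕ 0` and `(M Q)ᴴ (M Q) = 0 ⊕ B`. Finally `N Nᴴ` and `Nᴴ N` are Hermitian
with the same characteristic polynomial, hence unitarily similar.
-/

open scoped Matrix ComplexOrder

namespace Matrix

variable {𝕜 ι : Type*} [RCLike 𝕜] [Fintype ι] [DecidableEq ι]

theorem IsHermitian.exists_unitary_conj_eq_of_charpoly_eq {A B : Matrix ι ι 𝕜}
    (hA : A.IsHermitian) (hB : B.IsHermitian) (h : A.charpoly = B.charpoly) :
    ∃ U ∈ unitaryGroup ι 𝕜, A = U * B * Uᴴ := by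
  let U : unitaryGroup ι 𝕜 := hA.eigenvectorUnitary * star hB.eigenvectorUnitary
  refine ⟨U, U.prop, ?_⟩
  have hA' := hA.spectral_theorem
  rwa [(hA.eigenvalues_eq_eigenvalues_iff hB).mpr h, ← hB.conjStarAlgAut_star_eigenvectorUnitary,
    ← Unitary.conjStarAlgAut_mul_apply] at hA'

theorem exists_unitary_mul_conjTranspose_eq (N : Matrix ι ι 𝕜) :
    ∃ U ∈ unitaryGroup ι 𝕜, N * Nᴴ = U * (Nᴴ * N) * Uᴴ :=
  (isHermitian_mul_conjTranspose_self N).exists_unitary_conj_eq_of_charpoly_eq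
    (isHermitian_conjTranspose_mul_self N) (charpoly_mul_comm _ _)

open scoped MatrixOrder in
theorem PosSemidef.exists_isHermitian_mul_self_eq {H : Matrix ι ι 𝕜} (hH : H.PosSemidef) :
    ∃ M : Matrix ι ι 𝕜, M.IsHermitian ∧ M * M = H :=
  ⟨CFC.sqrt H, (nonneg_iff_posSemidef.mp (CFC.sqrt_nonneg H)).isHermitian,
    CFC.sqrt_mul_sqrt_self H hH.nonneg⟩

theorem PosSemidef.exists_unitary_conj_add_unitary_conj {H : Matrix ι ι 𝕜} (hH : H.PosSemidef)
    {P Q : Matrix ι ι 𝕜} (hPQ : P * Pᴴ + Q * Qᴴ = 1) :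
    ∃ U ∈ unitaryGroup ι 𝕜, ∃ V ∈ unitaryGroup ι 𝕜,
      H = U * (Pᴴ * H * P) * Uᴴ + V * (Qᴴ * H * Q) * Vᴴ := by
  obtain ⟨M, hM, rfl⟩ := hH.exists_isHermitian_mul_self_eq
  have gram (R : Matrix ι ι 𝕜) : (M * R)ᴴ * (M * R) = Rᴴ * (M * M) * R := by
    rw [conjTranspose_mul, hM.eq]; noncomm_ring
  obtain ⟨U, hU, hMP⟩ := exists_unitary_mul_conjTranspose_eq (M * P)
  obtain ⟨V, hV, hMQ⟩ := exists_unitary_mul_conjTranspose_eq (M * Q)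
  refine ⟨U, hU, V, hV, ?_⟩
  calc M * M = M * (P * Pᴴ + Q * Qᴴ) * Mᴴ := by rw [hPQ, hM.eq, Matrix.mul_one]
    _ = (M * P) * (M * P)ᴴ + (M * Q) * (M * Q)ᴴ := by simp only [conjTranspose_mul]; noncomm_ring
    _ = _ := by rw [hMP, hMQ, gram, gram]

theorem PosSemidef.exists_unitary_conj_fromBlocks_add {m n : Type*} [Fintype m] [DecidableEq m]
    [Fintype n] [DecidableEq n] {A : Matrix m m 𝕜} {B : Matrix n n 𝕜} {X : Matrix m n 𝕜}
    (hH : (fromBlocks A X Xᴴ B).PosSemidef) :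
    ∃ U ∈ unitaryGroup (m ⊕ n) 𝕜, ∃ V ∈ unitaryGroup (m ⊕ n) 𝕜,
      fromBlocks A X Xᴴ B = U * fromBlocks A 0 0 0 * Uᴴ + V * fromBlocks 0 0 0 B * Vᴴ := by
  have hPQ : fromBlocks (1 : Matrix m m 𝕜) 0 0 (0 : Matrix n n 𝕜) * (fromBlocks 1 0 0 0)ᴴ +
      fromBlocks 0 0 0 1 * (fromBlocks 0 0 0 1)ᴴ = 1 := by
    simp [fromBlocks_conjTranspose, fromBlocks_multiply, fromBlocks_add, ← fromBlocks_one]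
  simpa [fromBlocks_conjTranspose, fromBlocks_multiply] using
    hH.exists_unitary_conj_add_unitary_conj hPQ

end Matrix

/-- Every positive semidefinite block matrix `[[A, X],[X*, B]]` can be
written as `U (A ⊕ 0) U* + V (0 ⊕ B) V*` for some unitaries `U, V`. -/
theorem posSemidef_block_decomposition {n m : ℕ}
    (A : Matrix (Fin n) (Fin n) ℂ) (B : Matrix (Fin m) (Fin m) ℂ)
    (X : Matrix (Fin n) (Fin m) ℂ)
    (hH : (Matrix.fromBlocks A X Xᴴ B).PosSemidef) :
    ∃ U V : Matrix (Fin n ⊕ Fin m) (Fin n ⊕ Fin m) ℂ,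
      U ∈ Matrix.unitaryGroup (Fin n ⊕ Fin m) ℂ ∧
      V ∈ Matrix.unitaryGroup (Fin n ⊕ Fin m) ℂ ∧
      Matrix.fromBlocks A X Xᴴ B =
        U * Matrix.fromBlocks A 0 0 0 * Uᴴ + V * Matrix.fromBlocks 0 0 0 B * Vᴴ := by
  obtain ⟨U, hU, V, hV, h⟩ := hH.exists_unitary_conj_fromBlocks_add
  exact ⟨U, V, hU, hV, h⟩
end

section
/- Let Ω ⊆ ℝ be an interval, let f : Ω → [0,∞) be concave, and let A, B be n×n Hermitian complex matrices with spectra contained in Ω. Then for every symmetric anti-norm ‖·‖_!, ‖f((A+B)/2)‖_! ≥ ‖(f(A)+f(B))/2‖_! ≥ (‖f(A)‖_! + ‖f(B)‖_!)/2. -/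
/-!
Let `C = (A + B) / 2` and let `W` be a unitary diagonalising `C`. If `A = ∑ⱼ aⱼ Pⱼ`, the `i`-th
diagonal entries of `W* A W` and `W* f(A) W` are `∑ⱼ wⱼ aⱼ` and `∑ⱼ wⱼ f(aⱼ)` for the same
probability weights `wⱼ = ‖Pⱼ W eᵢ‖²`, so by Jensen the second is at most `f` of the first. With
concavity once more, and since the diagonals of `W* A W` and `W* B W` average to the eigenvalues
`λᵢ(C)`, the diagonal of `W* ((f(A) + f(B)) / 2) W` is dominated entrywise by the eigenvalues
`f(λᵢ(C))` of `f(C)`. An anti-norm can only grow under pinching to the diagonal (the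
pinching is the average of the conjugations by the diagonal sign unitaries, so superadditivity and
unitary invariance apply) and is monotone in the Loewner order, which gives the first inequality.
The second is superadditivity and homogeneity.
-/

open scoped Matrix ComplexOrder

/-- A symmetric anti-norm on the cone of positive semidefinite complex matrices. -/
def IsSymmetricAntiNorm {k : Type*} [Fintype k] [DecidableEq k]
    (N : Matrix k k ℂ → ℝ) : Prop :=
  (∀ A : Matrix k k ℂ, A.PosSemidef → 0 ≤ N A) ∧
  (∀ (c : ℝ), 0 ≤ c → ∀ A : Matrix k k ℂ, A.PosSemidef → N (c • A) = c * N A) ∧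
  (∀ A B : Matrix k k ℂ, A.PosSemidef → B.PosSemidef → N A + N B ≤ N (A + B)) ∧
  (∀ (U A : Matrix k k ℂ), U ∈ Matrix.unitaryGroup k ℂ → A.PosSemidef →
    N (U * A * Uᴴ) = N A)

open Matrix

section SignDiagonal

variable {k : Type*} [DecidableEq k]

def signDiagonal (ε : k → ℤˣ) : Matrix k k ℂ := diagonal fun i => ((ε i : ℤ) : ℂ)

theorem signDiagonal_conjTranspose (ε : k → ℤˣ) : (signDiagonal ε)ᴴ = signDiagonal ε := by
  simp [signDiagonal, diagonal_conjTranspose]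

theorem signDiagonal_mem_unitaryGroup [Fintype k] (ε : k → ℤˣ) :
    signDiagonal ε ∈ unitaryGroup k ℂ := by
  rw [mem_unitaryGroup_iff, star_eq_conjTranspose, signDiagonal_conjTranspose, signDiagonal,
    diagonal_mul_diagonal, ← diagonal_one]
  congr! 2 with i
  rw [← Int.cast_mul, ← Units.val_mul, Int.units_mul_self, Units.val_one, Int.cast_one]

theorem sum_units_apply_mul_apply_eq_zero [Fintype k] {i j : k} (hij : i ≠ j) :
    ∑ ε : k → ℤˣ, (ε i * ε j : ℤ) = 0 := by
  -- flipping the sign of `ε i` negates every term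
  have hflip := Equiv.sum_comp (Equiv.mulLeft (Pi.mulSingle i (-1)))
    fun ε : k → ℤˣ => (ε i * ε j : ℤ)
  simp only [Equiv.coe_mulLeft, Pi.mul_apply, Pi.mulSingle_eq_same, Pi.mulSingle_eq_of_ne hij.symm,
    one_mul, Units.val_neg, neg_mul, Finset.sum_neg_distrib, neg_eq_iff_eq_neg] at hflip
  linarith

theorem sum_signDiagonal_mul_mul_signDiagonal [Fintype k] (A : Matrix k k ℂ) :
    ∑ ε : k → ℤˣ, signDiagonal ε * A * signDiagonal ε =
      (Fintype.card (k → ℤˣ) : ℝ) • diagonal A.diag := by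
  ext i j
  simp only [Matrix.sum_apply, signDiagonal, mul_diagonal, diagonal_mul, Matrix.smul_apply]
  rcases eq_or_ne i j with rfl | hij
  · have hsq (ε : k → ℤˣ) : ((ε i : ℤ) : ℂ) * A i i * ((ε i : ℤ) : ℂ) = A i i := by
      rw [mul_right_comm, ← Int.cast_mul, ← Units.val_mul, Int.units_mul_self]
      simp
    simp [hsq, Complex.real_smul]
  · have hcomm (ε : k → ℤˣ) :
        ((ε i : ℤ) : ℂ) * A i j * ((ε j : ℤ) : ℂ) = ((ε i * ε j : ℤ) : ℂ) * A i j := by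
      push_cast; ring
    simp only [hcomm, ← Finset.sum_mul, ← Int.cast_sum, sum_units_apply_mul_apply_eq_zero hij]
    simp [hij]

end SignDiagonal

open scoped MatrixOrder in
theorem Matrix.posSemidef_cfc {k : Type*} [Fintype k] [DecidableEq k] {f : ℝ → ℝ}
    {A : Matrix k k ℂ} (hf : ∀ x ∈ spectrum ℝ A, 0 ≤ f x) : (cfc f A).PosSemidef :=
  nonneg_iff_posSemidef.mp (cfc_nonneg hf)

theorem Matrix.conjTranspose_mul_diagonal_mul_apply_self {m n : Type*} [Fintype m]
    [DecidableEq m] (Q : Matrix m n ℂ) (d : m → ℝ) (i : n) :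
    (Qᴴ * diagonal (fun j => (d j : ℂ)) * Q) i i = ↑(∑ j, Complex.normSq (Q j i) * d j) := by
  simp only [mul_apply, conjTranspose_apply, diagonal_apply, mul_ite, mul_zero,
    Finset.sum_ite_eq', Finset.mem_univ, if_true]
  push_cast
  refine Finset.sum_congr rfl fun j _ => ?_
  rw [Complex.normSq_eq_conj_mul_self]
  simp only [RCLike.star_def]
  ring

section Jensen

variable {k m : Type*} [Fintype k] [DecidableEq k]

theorem Matrix.IsHermitian.conjTranspose_mul_cfc_mul_apply_self {M : Matrix k k ℂ}
    (hM : M.IsHermitian) (g : ℝ → ℝ) (W : Matrix k m ℂ) (i : m) :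
    (Wᴴ * cfc g M * W) i i = ↑(∑ j, Complex.normSq
      (((hM.eigenvectorUnitary : Matrix k k ℂ)ᴴ * W) j i) * g (hM.eigenvalues j)) := by
  rw [← conjTranspose_mul_diagonal_mul_apply_self _ (fun j => g (hM.eigenvalues j)),
    hM.cfc_eq, IsHermitian.cfc, Unitary.conjStarAlgAut_apply]
  simp only [conjTranspose_mul, conjTranspose_conjTranspose, star_eq_conjTranspose,
    Matrix.mul_assoc]
  rfl

theorem ConcaveOn.exists_diag_conj_cfc_le {Ω : Set ℝ} {f : ℝ → ℝ} (hf : ConcaveOn ℝ Ω f)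
    {M : Matrix k k ℂ} (hM : M.IsHermitian) (hs : spectrum ℝ M ⊆ Ω) {W : Matrix k m ℂ}
    [DecidableEq m] (hW : Wᴴ * W = 1) (i : m) :
    ∃ t ∈ Ω, (Wᴴ * M * W) i i = t ∧ (Wᴴ * cfc f M * W) i i ≤ f t := by
  have hdiag := hM.conjTranspose_mul_cfc_mul_apply_self (W := W) (i := i)
  set w : k → ℝ := fun j => Complex.normSq (((hM.eigenvectorUnitary : Matrix k k ℂ)ᴴ * W) j i)
  have hw : ∑ j, w j = 1 := by
    have := hdiag 1
    rw [cfc_one ℝ M hM.isSelfAdjoint, Matrix.mul_one, hW, one_apply_eq] at this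
    simp only [Pi.one_apply, mul_one] at this
    exact_mod_cast this.symm
  have heΩ (j : k) : hM.eigenvalues j ∈ Ω := hs (hM.eigenvalues_mem_spectrum_real j)
  refine ⟨∑ j, w j * hM.eigenvalues j,
    hf.1.sum_mem (fun j _ => Complex.normSq_nonneg _) hw fun j _ => heΩ j, ?_, ?_⟩
  · have := hdiag id
    rwa [cfc_id ℝ M hM.isSelfAdjoint] at this
  · rw [hdiag f, Complex.real_le_real]
    simpa using hf.le_map_sum (fun j _ => Complex.normSq_nonneg _) hw fun j _ => heΩ j

end Jensen

namespace IsSymmetricAntiNorm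

variable {k : Type*} [Fintype k] [DecidableEq k] {N : Matrix k k ℂ → ℝ}

theorem map_nonneg (hN : IsSymmetricAntiNorm N) {A : Matrix k k ℂ} (hA : A.PosSemidef) :
    0 ≤ N A :=
  hN.1 A hA

theorem map_smul (hN : IsSymmetricAntiNorm N) {c : ℝ} (hc : 0 ≤ c) {A : Matrix k k ℂ}
    (hA : A.PosSemidef) : N (c • A) = c * N A :=
  hN.2.1 c hc A hA

theorem add_le_map_add (hN : IsSymmetricAntiNorm N) {A B : Matrix k k ℂ} (hA : A.PosSemidef)
    (hB : B.PosSemidef) : N A + N B ≤ N (A + B) :=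
  hN.2.2.1 A B hA hB

theorem map_conj_unitary (hN : IsSymmetricAntiNorm N) {U A : Matrix k k ℂ}
    (hU : U ∈ unitaryGroup k ℂ) (hA : A.PosSemidef) : N (U * A * Uᴴ) = N A :=
  hN.2.2.2 U A hU hA

theorem map_zero (hN : IsSymmetricAntiNorm N) : N 0 = 0 := by
  simpa using hN.map_smul le_rfl PosSemidef.zero

theorem sum_le_map_sum (hN : IsSymmetricAntiNorm N) {ι : Type*} (s : Finset ι)
    {A : ι → Matrix k k ℂ} (hA : ∀ i ∈ s, (A i).PosSemidef) :
    ∑ i ∈ s, N (A i) ≤ N (∑ i ∈ s, A i) := by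
  classical
  induction s using Finset.induction_on with
  | empty => simp [hN.map_zero]
  | insert a s ha ih =>
    rw [Finset.sum_insert ha, Finset.sum_insert ha]
    have hs : ∀ i ∈ s, (A i).PosSemidef := fun i hi => hA i (Finset.mem_insert_of_mem hi)
    calc N (A a) + ∑ i ∈ s, N (A i) ≤ N (A a) + N (∑ i ∈ s, A i) := by gcongr; exact ih hs
      _ ≤ N (A a + ∑ i ∈ s, A i) :=
        hN.add_le_map_add (hA a (Finset.mem_insert_self a s)) (posSemidef_sum s hs)

theorem map_mono (hN : IsSymmetricAntiNorm N) {A B : Matrix k k ℂ} (hA : A.PosSemidef)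
    (hAB : (B - A).PosSemidef) : N A ≤ N B := by
  have := hN.add_le_map_add hA hAB
  rw [add_sub_cancel] at this
  linarith [hN.map_nonneg hAB]

theorem map_le_map_diagonal_diag (hN : IsSymmetricAntiNorm N) {A : Matrix k k ℂ}
    (hA : A.PosSemidef) : N A ≤ N (diagonal A.diag) := by
  set c : ℝ := (Fintype.card (k → ℤˣ) : ℝ)
  have hc : 0 < c := Nat.cast_pos.mpr Fintype.card_pos
  have hconj (ε : k → ℤˣ) : (signDiagonal ε * A * signDiagonal ε).PosSemidef := by
    simpa [signDiagonal_conjTranspose] using hA.mul_mul_conjTranspose_same (signDiagonal ε)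
  have hN_conj (ε : k → ℤˣ) : N (signDiagonal ε * A * signDiagonal ε) = N A := by
    simpa [signDiagonal_conjTranspose] using
      hN.map_conj_unitary (signDiagonal_mem_unitaryGroup ε) hA
  have hdiag : (diagonal A.diag).PosSemidef :=
    posSemidef_diagonal_iff.mpr fun i => hA.diag_nonneg
  have hsum := hN.sum_le_map_sum Finset.univ fun ε _ => hconj ε
  rw [sum_signDiagonal_mul_mul_signDiagonal, hN.map_smul hc.le hdiag] at hsum
  simp only [hN_conj, Finset.sum_const, Finset.card_univ, nsmul_eq_mul] at hsum
  exact le_of_mul_le_mul_left hsum hc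

theorem map_le_of_diag_conj_le (hN : IsSymmetricAntiNorm N) {X W : Matrix k k ℂ}
    (hX : X.PosSemidef) (hW : W ∈ unitaryGroup k ℂ) {d : k → ℝ}
    (hd : ∀ i, (Wᴴ * X * W) i i ≤ d i) : N X ≤ N (diagonal fun i => (d i : ℂ)) := by
  have hY : (Wᴴ * X * W).PosSemidef := hX.conjTranspose_mul_mul_same W
  have hdiagY : (diagonal (Wᴴ * X * W).diag).PosSemidef :=
    posSemidef_diagonal_iff.mpr fun i => hY.diag_nonneg
  have hsub : ((diagonal fun i => (d i : ℂ)) - diagonal (Wᴴ * X * W).diag).PosSemidef := by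
    rw [diagonal_sub]
    exact posSemidef_diagonal_iff.mpr fun i => sub_nonneg.mpr (hd i)
  calc N X = N (Wᴴ * X * W) := by
        simpa [star_eq_conjTranspose] using (hN.map_conj_unitary (Unitary.star_mem hW) hX).symm
    _ ≤ N (diagonal (Wᴴ * X * W).diag) := hN.map_le_map_diagonal_diag hY
    _ ≤ N (diagonal fun i => (d i : ℂ)) := hN.map_mono hdiagY hsub

theorem map_smul_cfc_add_smul_cfc_le (hN : IsSymmetricAntiNorm N) {Ω : Set ℝ} {f : ℝ → ℝ}
    (hf_nonneg : ∀ x ∈ Ω, 0 ≤ f x) (hf : ConcaveOn ℝ Ω f) {A B : Matrix k k ℂ}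
    (hA : A.IsHermitian) (hB : B.IsHermitian) (hsA : spectrum ℝ A ⊆ Ω) (hsB : spectrum ℝ B ⊆ Ω)
    {a b : ℝ} (ha : 0 ≤ a) (hb : 0 ≤ b) (hab : a + b = 1) :
    N (a • cfc f A + b • cfc f B) ≤ N (cfc f (a • A + b • B)) := by
  set C := a • A + b • B
  have hC : C.IsHermitian := (hA.smul (.all a)).add (hB.smul (.all b))
  set W : Matrix k k ℂ := (hC.eigenvectorUnitary : Matrix k k ℂ)
  have hWu : W ∈ unitaryGroup k ℂ := hC.eigenvectorUnitary.2
  have hW : Wᴴ * W = 1 := mem_unitaryGroup_iff'.mp hWu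
  set X := a • cfc f A + b • cfc f B
  have hX : X.PosSemidef :=
    ((posSemidef_cfc fun x hx => hf_nonneg x (hsA hx)).smul ha).add
      ((posSemidef_cfc fun x hx => hf_nonneg x (hsB hx)).smul hb)
  have hconj (P Q : Matrix k k ℂ) (i : k) :
      (Wᴴ * (a • P + b • Q) * W) i i = a * (Wᴴ * P * W) i i + b * (Wᴴ * Q * W) i i := by
    simp [Matrix.mul_add, Matrix.add_mul, Complex.real_smul]
  have hCW : Wᴴ * C * W = diagonal (RCLike.ofReal ∘ hC.eigenvalues) := by
    have := hC.conjStarAlgAut_star_eigenvectorUnitary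
    rwa [Unitary.conjStarAlgAut_star_apply] at this
  have hX_le (i : k) : (Wᴴ * X * W) i i ≤ f (hC.eigenvalues i) := by
    obtain ⟨tA, htA, hAi, hfAi⟩ := hf.exists_diag_conj_cfc_le hA hsA hW i
    obtain ⟨tB, htB, hBi, hfBi⟩ := hf.exists_diag_conj_cfc_le hB hsB hW i
    have heig : hC.eigenvalues i = a * tA + b * tB := by
      have := hconj A B i
      rw [hCW, hAi, hBi, diagonal_apply_eq, Function.comp_apply] at this
      exact Complex.ofReal_injective (by simpa using this)
    have hfmid : a * f tA + b * f tB ≤ f (hC.eigenvalues i) := by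
      simpa [heig] using hf.2 htA htB ha hb hab
    calc (Wᴴ * X * W) i i = a * (Wᴴ * cfc f A * W) i i + b * (Wᴴ * cfc f B * W) i i :=
          hconj _ _ i
      _ ≤ a * f tA + b * f tB := by gcongr
      _ ≤ f (hC.eigenvalues i) := by exact_mod_cast hfmid
  have hD : (diagonal fun i => (f (hC.eigenvalues i) : ℂ)).PosSemidef :=
    posSemidef_diagonal_iff.mpr fun i =>
      (hX.conjTranspose_mul_mul_same W).diag_nonneg.trans (hX_le i)
  calc N X ≤ N (diagonal fun i => (f (hC.eigenvalues i) : ℂ)) :=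
        hN.map_le_of_diag_conj_le hX hWu hX_le
    _ = N (cfc f C) := by
        rw [hC.cfc_eq, IsHermitian.cfc, Unitary.conjStarAlgAut_apply]
        exact (hN.map_conj_unitary hWu hD).symm

end IsSymmetricAntiNorm

theorem antiNorm_concave_midpoint_general {n : ℕ} (Ω : Set ℝ)
    (f : ℝ → ℝ) (hf_nonneg : ∀ x ∈ Ω, 0 ≤ f x) (hf_concave : ConcaveOn ℝ Ω f)
    (A B : Matrix (Fin n) (Fin n) ℂ) (hA : A.IsHermitian) (hB : B.IsHermitian)
    (hspecA : spectrum ℝ A ⊆ Ω) (hspecB : spectrum ℝ B ⊆ Ω)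
    (N : Matrix (Fin n) (Fin n) ℂ → ℝ) (hN : IsSymmetricAntiNorm N) :
    N ((1/2 : ℝ) • (cfc f A + cfc f B)) ≤ N (cfc f ((1/2 : ℝ) • (A + B))) ∧
    (N (cfc f A) + N (cfc f B)) / 2 ≤ N ((1/2 : ℝ) • (cfc f A + cfc f B)) := by
  have hfA := posSemidef_cfc fun x hx => hf_nonneg x (hspecA hx)
  have hfB := posSemidef_cfc fun x hx => hf_nonneg x (hspecB hx)
  refine ⟨?_, ?_⟩
  · simpa only [smul_add] using hN.map_smul_cfc_add_smul_cfc_le hf_nonneg hf_concave hA hB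
      hspecA hspecB (by norm_num) (by norm_num) (by norm_num)
  · rw [hN.map_smul (by norm_num) (hfA.add hfB)]
    linarith [hN.add_le_map_add hfA hfB]

/-- If `f : Ω → [0,∞)` is concave on an interval `Ω` and `A, B` are
Hermitian with spectra in `Ω`, then for every symmetric anti-norm,
`‖f((A+B)/2)‖_! ≥ ‖(f(A)+f(B))/2‖_! ≥ (‖f(A)‖_! + ‖f(B)‖_!)/2`. -/
theorem antiNorm_concave_midpoint {n : ℕ} (Ω : Set ℝ) (hΩ : Ω.OrdConnected)
    (f : ℝ → ℝ) (hf_nonneg : ∀ x ∈ Ω, 0 ≤ f x) (hf_concave : ConcaveOn ℝ Ω f)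
    (A B : Matrix (Fin n) (Fin n) ℂ) (hA : A.IsHermitian) (hB : B.IsHermitian)
    (hspecA : spectrum ℝ A ⊆ Ω) (hspecB : spectrum ℝ B ⊆ Ω)
    (N : Matrix (Fin n) (Fin n) ℂ → ℝ) (hN : IsSymmetricAntiNorm N) :
    N ((1/2 : ℝ) • (cfc f A + cfc f B)) ≤ N (cfc f ((1/2 : ℝ) • (A + B))) ∧
    (N (cfc f A) + N (cfc f B)) / 2 ≤ N ((1/2 : ℝ) • (cfc f A + cfc f B)) :=
  antiNorm_concave_midpoint_general Ω f hf_nonneg hf_concave A B hA hB hspecA hspecB N hN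
end

section
/- Let Ω ⊆ ℝ be an interval with 0 ∈ Ω, let f : Ω → [0,∞) be concave, let A be an n×n Hermitian complex matrix with spectrum contained in Ω, and let Z ∈ M_n(ℂ) be a contraction (operator norm at most 1). Then for every symmetric anti-norm ‖·‖_!, ‖f(Z*AZ)‖_! ≥ ‖Z* f(A) Z‖_!. -/
open scoped Matrix ComplexOrder

/-! Let `W` diagonalize `B = Z* A Z`, with eigenvalues `β j`, and let `x = Z W e_j`, so that
`‖x‖ ≤ 1` and `⟪x, A x⟫ = β j`. Expanding `x` in an eigenbasis of `A` writes `⟪x, f(A) x⟫` and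
`⟪x, A x⟫` as `∑ wᵢ f(λᵢ)` and `∑ wᵢ λᵢ` with `∑ wᵢ ≤ 1`; Jensen's inequality, with the remaining
weight `1 - ∑ wᵢ` put on the point `0` where `f ≥ 0`, gives `⟪x, f(A) x⟫ ≤ f(β j)`. Thus the
diagonal of `W* (Z* f(A) Z) W` is dominated by that of `W* f(B) W = diag (f ∘ β)`. An anti-norm is
unitarily invariant, monotone, and (by superadditivity) increased by pinching a matrix to its
diagonal, since pinching is a composition of averages of two unitary conjugates. -/

theorem ConcaveOn.le_map_sum_of_sum_le_one {ι E : Type*} [Fintype ι] [AddCommGroup E]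
    [Module ℝ E] {s : Set E} {f : E → ℝ} (hf : ConcaveOn ℝ s f) (h0 : 0 ∈ s) (hf0 : 0 ≤ f 0)
    {w : ι → ℝ} {p : ι → E} (hw : ∀ i, 0 ≤ w i) (hw1 : ∑ i, w i ≤ 1) (hp : ∀ i, p i ∈ s) :
    ∑ i, w i • f (p i) ≤ f (∑ i, w i • p i) := by
  have h := hf.le_map_sum (t := Finset.univ)
    (w := fun o : Option ι => o.elim (1 - ∑ i, w i) w) (p := fun o => o.elim 0 p)
    (by rintro (_ | i) _ <;> simp [hw, hw1]) (by simp [Fintype.sum_option])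
    (by rintro (_ | i) _ <;> simp [h0, hp])
  simp only [Fintype.sum_option, Option.elim, smul_zero, zero_add] at h
  linarith [smul_nonneg (sub_nonneg.mpr hw1) hf0]

namespace Matrix

lemma conjTranspose_mul_mul_apply_self {m n R : Type*} [Fintype m] [CommSemiring R] [StarRing R]
    (U : Matrix m n R) (M : Matrix m m R) (j : n) :
    (Uᴴ * M * U) j j = star (U.col j) ⬝ᵥ (M *ᵥ U.col j) := by
  simp only [mul_apply, dotProduct, mulVec, conjTranspose_apply, Pi.star_apply, col_apply,
    Finset.sum_mul, Finset.mul_sum, mul_assoc]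
  exact Finset.sum_comm

section Pinching

variable {k : Type*} [DecidableEq k]

def pinch (S : Finset k) (M : Matrix k k ℂ) : Matrix k k ℂ :=
  of fun p q => if p = q ∨ (p ∉ S ∧ q ∉ S) then M p q else 0

@[simp] lemma pinch_empty (M : Matrix k k ℂ) : pinch ∅ M = M := by
  ext p q; simp [pinch]

variable [Fintype k]

lemma pinch_univ (M : Matrix k k ℂ) : pinch Finset.univ M = diagonal M.diag := by
  ext p q
  by_cases h : p = q <;> simp [pinch, diagonal, h]

lemma diagonal_mulSingle_neg_one_mem_unitaryGroup (i : k) :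
    diagonal (Pi.mulSingle i (-1)) ∈ unitaryGroup k ℂ := by
  rw [mem_unitaryGroup_iff, star_eq_conjTranspose, diagonal_conjTranspose, diagonal_mul_diagonal,
    ← diagonal_one]
  congr 1
  ext p
  by_cases h : p = i <;> simp [h]

lemma pinch_insert (i : k) (S : Finset k) (M : Matrix k k ℂ) :
    pinch (insert i S) M = (2⁻¹ : ℝ) • (pinch S M +
      diagonal (Pi.mulSingle i (-1)) * pinch S M * (diagonal (Pi.mulSingle i (-1)))ᴴ) := by
  ext p q
  simp only [pinch, of_apply, smul_apply, add_apply, diagonal_conjTranspose, diagonal_mul,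
    mul_diagonal, Finset.mem_insert, Complex.real_smul, Pi.star_apply, Pi.mulSingle_apply]
  split_ifs <;> simp_all <;> ring

lemma PosSemidef.pinch {M : Matrix k k ℂ} (hM : M.PosSemidef) (S : Finset k) :
    (pinch S M).PosSemidef := by
  induction S using Finset.induction_on with
  | empty => simpa using hM
  | insert i S _ ih =>
    rw [pinch_insert]
    exact (ih.add (ih.mul_mul_conjTranspose_same _)).smul (by norm_num)

end Pinching

variable {k 𝕜 : Type*} [Fintype k] [DecidableEq k] [RCLike 𝕜]

lemma dotProduct_mulVec_self_le_of_posSemidef_one_sub {Z : Matrix k k 𝕜}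
    (hZ : (1 - Zᴴ * Z).PosSemidef) (v : k → 𝕜) : star (Z *ᵥ v) ⬝ᵥ (Z *ᵥ v) ≤ star v ⬝ᵥ v := by
  have := hZ.dotProduct_mulVec_nonneg v
  rw [sub_mulVec, dotProduct_sub, one_mulVec, sub_nonneg, ← mulVec_mulVec,
    dotProduct_mulVec] at this
  rwa [star_mulVec]

namespace IsHermitian

variable {A : Matrix k k 𝕜}

noncomputable def spectralWeight (hA : A.IsHermitian) (x : k → 𝕜) (i : k) : ℝ :=
  ‖(star (hA.eigenvectorUnitary : Matrix k k 𝕜) *ᵥ x) i‖ ^ 2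

variable (hA : A.IsHermitian) {x : k → 𝕜}

lemma spectralWeight_nonneg (x : k → 𝕜) (i : k) : 0 ≤ hA.spectralWeight x i := by
  unfold spectralWeight; positivity

lemma dotProduct_cfc_mulVec (g : ℝ → ℝ) (x : k → 𝕜) :
    star x ⬝ᵥ (cfc g A *ᵥ x) = ((∑ i, hA.spectralWeight x i * g (hA.eigenvalues i) : ℝ) : 𝕜) := by
  set V : Matrix k k 𝕜 := (hA.eigenvectorUnitary : Matrix k k 𝕜)
  have hV : star x ᵥ* V = star (star V *ᵥ x) := by
    rw [star_mulVec, star_eq_conjTranspose, conjTranspose_conjTranspose]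
  rw [hA.cfc_eq, IsHermitian.cfc, Unitary.conjStarAlgAut_apply, ← mulVec_mulVec, ← mulVec_mulVec,
    dotProduct_mulVec, hV]
  simp only [dotProduct, mulVec_diagonal, Pi.star_apply, Function.comp_apply, spectralWeight,
    RCLike.ofReal_sum, RCLike.ofReal_mul, RCLike.ofReal_pow, ← RCLike.conj_mul, RCLike.star_def]
  exact Finset.sum_congr rfl fun i _ => by ring

lemma sum_spectralWeight_le_one (hx : star x ⬝ᵥ x ≤ 1) : ∑ i, hA.spectralWeight x i ≤ 1 := by
  have h := hA.dotProduct_cfc_mulVec (fun _ => 1) x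
  rw [cfc_const_one ℝ A, one_mulVec] at h
  simp only [mul_one] at h
  exact_mod_cast h ▸ hx

lemma eq_sum_spectralWeight_mul_eigenvalues {t : ℝ} (ht : star x ⬝ᵥ (A *ᵥ x) = t) :
    t = ∑ i, hA.spectralWeight x i * hA.eigenvalues i := by
  have h := hA.dotProduct_cfc_mulVec id x
  rw [cfc_id ℝ A, ht] at h
  exact_mod_cast h

include hA in
lemma dotProduct_cfc_mulVec_le {Ω : Set ℝ} (hspec : spectrum ℝ A ⊆ Ω) (h0 : 0 ∈ Ω)
    (hx : star x ⬝ᵥ x ≤ 1) {t : ℝ} (ht : star x ⬝ᵥ (A *ᵥ x) = t) {f : ℝ → ℝ}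
    (hf : ConcaveOn ℝ Ω f) (hf0 : 0 ≤ f 0) : star x ⬝ᵥ (cfc f A *ᵥ x) ≤ (f t : 𝕜) := by
  rw [hA.dotProduct_cfc_mulVec, RCLike.ofReal_le_ofReal,
    hA.eq_sum_spectralWeight_mul_eigenvalues ht]
  exact hf.le_map_sum_of_sum_le_one h0 hf0 (hA.spectralWeight_nonneg x)
    (hA.sum_spectralWeight_le_one hx) fun i => hspec (hA.eigenvalues_mem_spectrum_real i)

end IsHermitian

end Matrix

open Matrix

namespace IsSymmetricAntiNorm

variable {k : Type*} [Fintype k] [DecidableEq k] {N : Matrix k k ℂ → ℝ}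

lemma mono (hN : IsSymmetricAntiNorm N) {P Q : Matrix k k ℂ} (hP : P.PosSemidef)
    (hPQ : (Q - P).PosSemidef) : N P ≤ N Q := by
  have := hN.2.2.1 P (Q - P) hP hPQ
  rw [add_sub_cancel] at this
  linarith [hN.1 _ hPQ]

lemma map_star_mul_mul (hN : IsSymmetricAntiNorm N) {U M : Matrix k k ℂ}
    (hU : U ∈ unitaryGroup k ℂ) (hM : M.PosSemidef) : N (star U * M * U) = N M := by
  simpa [star_eq_conjTranspose] using hN.2.2.2 (star U) M (Unitary.star_mem hU) hM

lemma le_smul_add_mul_mul_conjTranspose (hN : IsSymmetricAntiNorm N) {U M : Matrix k k ℂ}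
    (hU : U ∈ unitaryGroup k ℂ) (hM : M.PosSemidef) :
    N M ≤ N ((2⁻¹ : ℝ) • (M + U * M * Uᴴ)) := by
  have hUM := hM.mul_mul_conjTranspose_same U
  rw [hN.2.1 _ (by norm_num) _ (hM.add hUM)]
  linarith [hN.2.2.1 _ _ hM hUM, hN.2.2.2 U M hU hM]

lemma le_pinch (hN : IsSymmetricAntiNorm N) {M : Matrix k k ℂ} (hM : M.PosSemidef)
    (S : Finset k) : N M ≤ N (pinch S M) := by
  induction S using Finset.induction_on with
  | empty => simp
  | insert i S _ ih =>
    rw [pinch_insert]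
    exact ih.trans <| hN.le_smul_add_mul_mul_conjTranspose
      (diagonal_mulSingle_neg_one_mem_unitaryGroup i) (hM.pinch S)

lemma le_diagonal_diag (hN : IsSymmetricAntiNorm N) {M : Matrix k k ℂ} (hM : M.PosSemidef) :
    N M ≤ N (diagonal M.diag) :=
  pinch_univ M ▸ hN.le_pinch hM Finset.univ

lemma le_of_diag_le (hN : IsSymmetricAntiNorm N) {X U : Matrix k k ℂ} (hX : X.PosSemidef)
    (hU : U ∈ unitaryGroup k ℂ) {d : k → ℝ} (hd : ∀ j, (star U * X * U) j j ≤ d j) :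
    N X ≤ N (U * diagonal (fun j => (d j : ℂ)) * star U) := by
  have hY : (star U * X * U).PosSemidef := by
    simpa [star_eq_conjTranspose] using hX.conjTranspose_mul_mul_same U
  have hD : (diagonal fun j => (d j : ℂ)).PosSemidef :=
    posSemidef_diagonal_iff.mpr fun j => hY.diag_nonneg.trans (hd j)
  calc N X = N (star U * X * U) := (hN.map_star_mul_mul hU hX).symm
    _ ≤ N (diagonal (star U * X * U).diag) := hN.le_diagonal_diag hY
    _ ≤ N (diagonal fun j => (d j : ℂ)) := by
      refine hN.mono (posSemidef_diagonal_iff.mpr fun j => hY.diag_nonneg) ?_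
      rw [diagonal_sub]
      exact posSemidef_diagonal_iff.mpr fun j => sub_nonneg.mpr (hd j)
    _ = N (U * diagonal (fun j => (d j : ℂ)) * star U) := by
      simpa [star_eq_conjTranspose] using (hN.2.2.2 U _ hU hD).symm

end IsSymmetricAntiNorm

theorem antiNorm_concave_contraction_general {n : ℕ} (Ω : Set ℝ)
    (h0 : (0:ℝ) ∈ Ω)
    (f : ℝ → ℝ) (hf_nonneg : ∀ x ∈ Ω, 0 ≤ f x) (hf_concave : ConcaveOn ℝ Ω f)
    (A : Matrix (Fin n) (Fin n) ℂ) (hA : A.IsHermitian) (hspec : spectrum ℝ A ⊆ Ω)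
    (Z : Matrix (Fin n) (Fin n) ℂ) (hZ : ((1 : Matrix (Fin n) (Fin n) ℂ) - Zᴴ * Z).PosSemidef)
    (N : Matrix (Fin n) (Fin n) ℂ → ℝ) (hN : IsSymmetricAntiNorm N) :
    N (Zᴴ * cfc f A * Z) ≤ N (cfc f (Zᴴ * A * Z)) := by
  have hB : (Zᴴ * A * Z).IsHermitian := isHermitian_conjTranspose_mul_mul Z hA
  set W : Matrix (Fin n) (Fin n) ℂ := (hB.eigenvectorUnitary : Matrix (Fin n) (Fin n) ℂ)
  have hW : W ∈ unitaryGroup (Fin n) ℂ := SetLike.coe_mem _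
  have hfA : (cfc f A).PosSemidef := by
    open scoped MatrixOrder in
    exact (cfc_nonneg fun x hx => hf_nonneg x (hspec hx)).posSemidef
  rw [hB.cfc_eq, IsHermitian.cfc, Unitary.conjStarAlgAut_apply]
  refine hN.le_of_diag_le (hfA.conjTranspose_mul_mul_same Z) hW fun j => ?_
  set x := (Z * W).col j with hx_def
  have hentry (M : Matrix (Fin n) (Fin n) ℂ) :
      (star W * (Zᴴ * M * Z) * W) j j = star x ⬝ᵥ (M *ᵥ x) := by
    rw [hx_def, ← conjTranspose_mul_mul_apply_self, conjTranspose_mul, star_eq_conjTranspose]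
    simp only [mul_assoc]
  have hx : star x ⬝ᵥ x ≤ 1 :=
    calc star x ⬝ᵥ x ≤ star (W.col j) ⬝ᵥ W.col j := by
          rw [hx_def, ← mulVec_single_one, ← mulVec_mulVec, mulVec_single_one]
          exact dotProduct_mulVec_self_le_of_posSemidef_one_sub hZ _
      _ = (Wᴴ * W) j j := by rw [← mul_one Wᴴ, conjTranspose_mul_mul_apply_self, one_mulVec]
      _ = 1 := by rw [← star_eq_conjTranspose, mem_unitaryGroup_iff'.mp hW, one_apply_eq]
  have hβ : star x ⬝ᵥ (A *ᵥ x) = hB.eigenvalues j := by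
    rw [← hentry, ← Unitary.conjStarAlgAut_star_apply (S := ℂ),
      hB.conjStarAlgAut_star_eigenvectorUnitary, diagonal_apply_eq]
    rfl
  rw [hentry]
  exact hA.dotProduct_cfc_mulVec_le hspec h0 hx hβ hf_concave (hf_nonneg 0 h0)

/-- Let `Ω` be an interval with `0 ∈ Ω`, `f : Ω → [0,∞)` concave, `A`
Hermitian with spectrum in `Ω`, and `Z` a contraction (`Z*Z ≤ I`). Then every symmetric
anti-norm satisfies `‖f(Z*AZ)‖_! ≥ ‖Z* f(A) Z‖_!`. -/
theorem antiNorm_concave_contraction {n : ℕ} (Ω : Set ℝ) (hΩ : Ω.OrdConnected)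
    (h0 : (0:ℝ) ∈ Ω)
    (f : ℝ → ℝ) (hf_nonneg : ∀ x ∈ Ω, 0 ≤ f x) (hf_concave : ConcaveOn ℝ Ω f)
    (A : Matrix (Fin n) (Fin n) ℂ) (hA : A.IsHermitian) (hspec : spectrum ℝ A ⊆ Ω)
    (Z : Matrix (Fin n) (Fin n) ℂ) (hZ : ((1 : Matrix (Fin n) (Fin n) ℂ) - Zᴴ * Z).PosSemidef)
    (N : Matrix (Fin n) (Fin n) ℂ → ℝ) (hN : IsSymmetricAntiNorm N) :
    N (Zᴴ * cfc f A * Z) ≤ N (cfc f (Zᴴ * A * Z)) :=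
  antiNorm_concave_contraction_general Ω h0 f hf_nonneg hf_concave A hA hspec Z hZ N hN
end

section
/- Let g : [0,∞) → [0,∞) be convex and let q ∈ (0,1) be such that g^q is subadditive, i.e. g(a+b)^q ≤ g(a)^q + g(b)^q for all a, b ≥ 0. Then for all n×n positive semidefinite complex matrices A, B and every symmetric norm ‖·‖ on M_n(ℂ), ‖g(A+B)‖^q ≤ ‖g(A)‖^q + ‖g(B)‖^q. -/
open scoped Matrix ComplexOrder

/-- A symmetric (unitarily invariant) norm on square complex matrices indexed by `k`. -/
def IsSymmetricNorm {k : Type*} [Fintype k] [DecidableEq k]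
    (N : Matrix k k ℂ → ℝ) : Prop :=
  (∀ A B : Matrix k k ℂ, N (A + B) ≤ N A + N B) ∧
  (∀ (c : ℂ) (A : Matrix k k ℂ), N (c • A) = ‖c‖ * N A) ∧
  (∀ A : Matrix k k ℂ, N A = 0 → A = 0) ∧
  (∀ (A U V : Matrix k k ℂ), U ∈ Matrix.unitaryGroup k ℂ →
    V ∈ Matrix.unitaryGroup k ℂ → N (U * A * V) = N A)

/-!
Write `a`, `b`, `c` for the eigenvalue vectors of `A`, `B`, `A + B`. Comparing diagonals after
conjugating by an eigenbasis of `A + B` gives `c = P a + Q b` with `P`, `Q` doubly stochastic,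
and Jensen gives `g (P a) ≤ P (g a)`, so entrywise `g(c)^q ≤ (P g(a))^q + (Q g(b))^q`.
The norm of `g(X)` is `Φ (g (eigenvalues of X))` for the symmetric gauge function `Φ` of the
norm, which is monotone in absolute values and contracted by doubly stochastic matrices
(Birkhoff). It remains to lift an entrywise inequality `w^q ≤ u^q + v^q` to
`Φ(w)^q ≤ Φ(u)^q + Φ(v)^q`: the concave, homogeneous mean `(u^q + v^q)^(1/q)` lies below its
tangent plane `s u + t v` at `(Φ u, Φ v)`, so `w ≤ s u + t v` entrywise, and the triangle
inequality for `Φ` concludes.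
-/

open Matrix

/-- `(s, t)` is the gradient at `(α, β)` of the concave, positively homogeneous map
`(u, v) ↦ (u ^ q + v ^ q) ^ q⁻¹`. -/
theorem Real.exists_tangent_rpow_add_rpow {q α β : ℝ} (hq0 : 0 < q) (hq1 : q < 1)
    (hα : 0 < α) (hβ : 0 < β) :
    ∃ s t : ℝ, 0 ≤ s ∧ 0 ≤ t ∧ s * α + t * β = (α ^ q + β ^ q) ^ q⁻¹ ∧
      ∀ u v : ℝ, 0 ≤ u → 0 ≤ v → u ^ q + v ^ q ≤ (s * u + t * v) ^ q := by
  set M := (α ^ q + β ^ q) ^ q⁻¹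
  have hM : 0 < M := by positivity
  have hMq : M ^ q = α ^ q + β ^ q := Real.rpow_inv_rpow (by positivity) hq0.ne'
  set x := α / M
  set y := β / M
  have hx : 0 < x := by positivity
  have hy : 0 < y := by positivity
  have hxy : x ^ q + y ^ q = 1 := by
    rw [Real.div_rpow hα.le hM.le, Real.div_rpow hβ.le hM.le, ← add_div, hMq, div_self]
    positivity
  have hpow : ∀ z : ℝ, 0 < z → ∀ w, z ^ (q - 1) * w = z ^ q * (w / z) := fun z hz w => by
    rw [Real.rpow_sub_one hz.ne']
    ring
  refine ⟨x ^ (q - 1), y ^ (q - 1), by positivity, by positivity, ?_, fun u v hu hv => ?_⟩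
  · rw [hpow x hx, hpow y hy, div_div_cancel₀ hα.ne', div_div_cancel₀ hβ.ne', ← add_mul,
      hxy, one_mul]
  · have hconc := (Real.concaveOn_rpow hq0.le hq1.le).2 (x := u / x) (y := v / y)
      (div_nonneg hu hx.le) (div_nonneg hv hy.le) (by positivity) (by positivity) hxy
    have hux : x ^ q * (u / x) ^ q = u ^ q := by
      rw [Real.div_rpow hu hx.le, mul_div_cancel₀ _ (by positivity)]
    have hvy : y ^ q * (v / y) ^ q = v ^ q := by
      rw [Real.div_rpow hv hy.le, mul_div_cancel₀ _ (by positivity)]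
    rw [hpow x hx, hpow y hy]
    simpa only [smul_eq_mul, hux, hvy] using hconc

theorem Complex.exists_norm_eq_one_re_eq {r : ℝ} (hr : |r| ≤ 1) :
    ∃ e : ℂ, ‖e‖ = 1 ∧ e.re = r :=
  ⟨exp (Real.arccos r * I), norm_exp_ofReal_mul_I _, by
    rw [exp_ofReal_mul_I_re, Real.cos_arccos (abs_le.1 hr).1 (abs_le.1 hr).2]⟩

section

variable {k : Type*} [Fintype k] [DecidableEq k]

theorem Matrix.diagonal_mem_unitaryGroup {e : k → ℂ} (he : ∀ i, ‖e i‖ = 1) :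
    diagonal e ∈ unitaryGroup k ℂ := by
  rw [mem_unitaryGroup_iff, star_eq_conjTranspose, diagonal_conjTranspose, diagonal_mul_diagonal,
    ← diagonal_one]
  congr 1
  funext i
  simp [Complex.mul_conj, Complex.normSq_eq_norm_sq, he i]

theorem Matrix.permMatrix_mem_unitaryGroup (σ : Equiv.Perm k) :
    σ.permMatrix ℂ ∈ unitaryGroup k ℂ := by
  rw [mem_unitaryGroup_iff, star_eq_conjTranspose, conjTranspose_permMatrix, ← permMatrix_mul,
    inv_mul_cancel, permMatrix_one]

theorem Matrix.normSq_mem_doublyStochastic {M : Matrix k k ℂ} (hM : M ∈ unitaryGroup k ℂ) :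
    of (fun i j => Complex.normSq (M i j)) ∈ doublyStochastic ℝ k := by
  rw [mem_doublyStochastic_iff_sum]
  refine ⟨fun _ _ => Complex.normSq_nonneg _, fun i => ?_, fun j => ?_⟩
  · have h := congrFun (congrFun (mem_unitaryGroup_iff.1 hM) i) i
    simp only [mul_apply, star_apply, RCLike.star_def, Complex.mul_conj, one_apply_eq] at h
    exact_mod_cast h
  · have h := congrFun (congrFun (mem_unitaryGroup_iff'.1 hM) j) j
    simp only [mul_apply, star_apply, RCLike.star_def, ← Complex.normSq_eq_conj_mul_self,
      one_apply_eq] at h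
    exact_mod_cast h

theorem Matrix.star_mul_diagonal_mul_apply_self (M : Matrix k k ℂ) (d : k → ℝ) (j : k) :
    (star M * diagonal (RCLike.ofReal ∘ d : k → ℂ) * M) j j
      = ((∑ l, Complex.normSq (M l j) * d l : ℝ) : ℂ) := by
  rw [mul_apply]
  simp only [mul_diagonal, star_apply, RCLike.star_def, Function.comp_apply]
  push_cast
  refine Finset.sum_congr rfl fun l _ => ?_
  rw [Complex.normSq_eq_conj_mul_self]
  exact mul_right_comm _ _ _

theorem ConvexOn.map_mulVec_le {s : Set ℝ} {g : ℝ → ℝ} (hg : ConvexOn ℝ s g)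
    {P : Matrix k k ℝ} (hP : P ∈ rowStochastic ℝ k) {a : k → ℝ} (ha : ∀ l, a l ∈ s)
    (j : k) :
    g ((P *ᵥ a) j) ≤ (P *ᵥ (g ∘ a)) j := by
  simpa [mulVec, dotProduct] using hg.map_sum_le (fun l _ => nonneg_of_mem_rowStochastic hP)
    (sum_row_of_mem_rowStochastic hP j) (fun l _ => ha l)

namespace Matrix.IsHermitian

theorem exists_mem_doublyStochastic_diag_conj {A : Matrix k k ℂ} (hA : A.IsHermitian)
    {V : Matrix k k ℂ} (hV : V ∈ unitaryGroup k ℂ) :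
    ∃ P ∈ doublyStochastic ℝ k,
      ∀ j, (star V * A * V) j j = ((P *ᵥ hA.eigenvalues) j : ℂ) := by
  set M := star (hA.eigenvectorUnitary : Matrix k k ℂ) * V
  have hM : M ∈ unitaryGroup k ℂ := mul_mem (Unitary.star_mem (SetLike.coe_mem _)) hV
  have hconj : star V * A * V = star M * diagonal (RCLike.ofReal ∘ hA.eigenvalues) * M := by
    conv_lhs => rw [hA.spectral_theorem, Unitary.conjStarAlgAut_apply]
    simp only [M, star_mul, star_star, Matrix.mul_assoc]
  refine ⟨(of fun i j => Complex.normSq (M i j))ᵀ,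
    transpose_mem_doublyStochastic_iff.2 (normSq_mem_doublyStochastic hM), fun j => ?_⟩
  rw [hconj, star_mul_diagonal_mul_apply_self]
  rfl

theorem exists_eigenvalues_add_eq {A B : Matrix k k ℂ} (hA : A.IsHermitian) (hB : B.IsHermitian)
    (hAB : (A + B).IsHermitian) :
    ∃ P ∈ doublyStochastic ℝ k, ∃ Q ∈ doublyStochastic ℝ k,
      hAB.eigenvalues = P *ᵥ hA.eigenvalues + Q *ᵥ hB.eigenvalues := by
  set V : Matrix k k ℂ := ↑hAB.eigenvectorUnitary
  have hV : V ∈ unitaryGroup k ℂ := SetLike.coe_mem _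
  obtain ⟨P, hP, hPA⟩ := hA.exists_mem_doublyStochastic_diag_conj hV
  obtain ⟨Q, hQ, hQB⟩ := hB.exists_mem_doublyStochastic_diag_conj hV
  have hdiag : star V * (A + B) * V = diagonal (RCLike.ofReal ∘ hAB.eigenvalues) := by
    simpa using hAB.conjStarAlgAut_star_eigenvectorUnitary
  refine ⟨P, hP, Q, hQ, funext fun j => Complex.ofReal_injective ?_⟩
  have h := congrFun (congrFun hdiag j) j
  rw [Matrix.mul_add, Matrix.add_mul, add_apply, hPA, hQB, diagonal_apply_eq] at h
  simpa using h.symm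

end Matrix.IsHermitian

end

namespace IsSymmetricNorm

variable {k : Type*} [Fintype k] [DecidableEq k] {N : Matrix k k ℂ → ℝ}

noncomputable def toSeminorm (hN : IsSymmetricNorm N) : Seminorm ℝ (Matrix k k ℂ) :=
  (Seminorm.of N hN.1 hN.2.1).restrictScalars ℝ

theorem real_smul (hN : IsSymmetricNorm N) (r : ℝ) (X : Matrix k k ℂ) :
    N (r • X) = |r| * N X :=
  map_smul_eq_mul hN.toSeminorm r X

theorem unitary_mul (hN : IsSymmetricNorm N) {U : Matrix k k ℂ} (hU : U ∈ unitaryGroup k ℂ)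
    (X : Matrix k k ℂ) : N (U * X) = N X := by
  simpa using hN.2.2.2 X U 1 hU (one_mem _)

theorem unitary_conj (hN : IsSymmetricNorm N) {U : Matrix k k ℂ} (hU : U ∈ unitaryGroup k ℂ)
    (X : Matrix k k ℂ) : N (U * X * star U) = N X :=
  hN.2.2.2 X U (star U) hU (Unitary.star_mem hU)

/-- A real diagonal contraction is the mean of two diagonal unitaries. -/
theorem diagonal_mul_le (hN : IsSymmetricNorm N) {r : k → ℝ} (hr : ∀ i, |r i| ≤ 1)
    (X : Matrix k k ℂ) : N (diagonal (RCLike.ofReal ∘ r) * X) ≤ N X := by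
  choose e he_norm he_re using fun i => Complex.exists_norm_eq_one_re_eq (hr i)
  have hE := diagonal_mem_unitaryGroup he_norm
  have hmean : diagonal (RCLike.ofReal ∘ r) * X
      = (2⁻¹ : ℝ) • (diagonal e * X + star (diagonal e) * X) := by
    rw [← add_mul, star_eq_conjTranspose, diagonal_conjTranspose, diagonal_add,
      ← smul_mul_assoc, ← diagonal_smul]
    congr 2
    funext i
    simp [Complex.add_conj, he_re]
  calc N (diagonal (RCLike.ofReal ∘ r) * X)
      ≤ 2⁻¹ * (N (diagonal e * X) + N (star (diagonal e) * X)) := by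
        rw [hmean, hN.real_smul, abs_of_pos (by norm_num)]
        gcongr
        exact hN.1 _ _
    _ = N X := by rw [hN.unitary_mul hE, hN.unitary_mul (Unitary.star_mem hE)]; ring

noncomputable def gauge (hN : IsSymmetricNorm N) : Seminorm ℝ (k → ℝ) :=
  hN.toSeminorm.comp
    ((diagonalLinearMap k ℝ ℂ).comp (Complex.ofRealCLM.toLinearMap.compLeft k))

theorem gauge_apply (hN : IsSymmetricNorm N) (v : k → ℝ) :
    hN.gauge v = N (diagonal (RCLike.ofReal ∘ v)) :=
  rfl

theorem gauge_comp_perm (hN : IsSymmetricNorm N) (v : k → ℝ) (σ : Equiv.Perm k) :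
    hN.gauge (v ∘ σ) = hN.gauge v := by
  have hconj : σ.permMatrix ℂ * diagonal (RCLike.ofReal ∘ v) * star (σ.permMatrix ℂ)
      = diagonal (RCLike.ofReal ∘ v ∘ σ) := by
    rw [star_eq_conjTranspose, conjTranspose_permMatrix, PEquiv.toMatrix_toPEquiv_mul,
      PEquiv.mul_toMatrix_toPEquiv, submatrix_submatrix, Equiv.Perm.inv_def, Equiv.symm_symm,
      Function.comp_id, Function.id_comp, submatrix_diagonal_equiv]
    rfl
  rw [gauge_apply, gauge_apply, ← hconj, hN.unitary_conj (permMatrix_mem_unitaryGroup σ)]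

theorem gauge_mulVec_le (hN : IsSymmetricNorm N) {P : Matrix k k ℝ}
    (hP : P ∈ doublyStochastic ℝ k) (v : k → ℝ) : hN.gauge (P *ᵥ v) ≤ hN.gauge v := by
  obtain ⟨w, hw0, hw1, rfl⟩ := exists_eq_sum_perm_of_mem_doublyStochastic hP
  calc hN.gauge ((∑ σ, w σ • σ.permMatrix ℝ) *ᵥ v)
      ≤ ∑ σ, hN.gauge (w σ • (v ∘ σ)) := by
        simp only [sum_mulVec, smul_mulVec, permMatrix_mulVec]
        exact Finset.le_sum_of_subadditive _ (map_zero _).le (map_add_le_add _) _ _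
    _ = ∑ σ, w σ * hN.gauge v := by
        simp only [map_smul_eq_mul, gauge_comp_perm, Real.norm_of_nonneg (hw0 _)]
    _ = hN.gauge v := by rw [← Finset.sum_mul, hw1, one_mul]

theorem gauge_le_of_abs_le (hN : IsSymmetricNorm N) {u w : k → ℝ} (h : ∀ i, |u i| ≤ |w i|) :
    hN.gauge u ≤ hN.gauge w := by
  -- `u / w` takes the junk value `0` where `w` vanishes, which is right since `u` vanishes there.
  have hfactor : diagonal (RCLike.ofReal ∘ u : k → ℂ)
      = diagonal (RCLike.ofReal ∘ (u / w)) * diagonal (RCLike.ofReal ∘ w) := by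
    rw [diagonal_mul_diagonal]
    congr 1
    funext i
    rcases eq_or_ne (w i) 0 with hwi | hwi
    · simpa [hwi] using h i
    · simp [div_mul_cancel₀ _ (Complex.ofReal_ne_zero.2 hwi)]
  rw [gauge_apply, gauge_apply, hfactor]
  refine hN.diagonal_mul_le (fun i => ?_) _
  rw [Pi.div_apply, abs_div]
  exact div_le_one_of_le₀ (h i) (abs_nonneg _)

theorem gauge_pos (hN : IsSymmetricNorm N) {u : k → ℝ} (hu : u ≠ 0) : 0 < hN.gauge u := by
  refine (apply_nonneg _ _).lt_of_ne' fun h0 => hu (funext fun i => ?_)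
  simpa using congrFun (congrFun (hN.2.2.1 _ h0) i) i

theorem gauge_rpow_le_rpow (hN : IsSymmetricNorm N) {q : ℝ} (hq : 0 < q) {v w : k → ℝ}
    (hv : 0 ≤ v) (hw : 0 ≤ w) (h : ∀ i, w i ^ q ≤ v i ^ q) :
    hN.gauge w ^ q ≤ hN.gauge v ^ q := by
  refine Real.rpow_le_rpow (apply_nonneg _ _) (hN.gauge_le_of_abs_le fun i => ?_) hq.le
  rw [abs_of_nonneg (hw i), abs_of_nonneg (hv i)]
  exact (Real.rpow_le_rpow_iff (hw i) (hv i) hq).1 (h i)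

theorem gauge_rpow_le_of_rpow_le (hN : IsSymmetricNorm N) {q : ℝ} (hq0 : 0 < q) (hq1 : q < 1)
    {u v w : k → ℝ} (hu : 0 ≤ u) (hv : 0 ≤ v) (hw : 0 ≤ w)
    (h : ∀ i, w i ^ q ≤ u i ^ q + v i ^ q) :
    hN.gauge w ^ q ≤ hN.gauge u ^ q + hN.gauge v ^ q := by
  rcases eq_or_ne u 0 with rfl | hu0
  · refine (hN.gauge_rpow_le_rpow hq0 hv hw fun i => ?_).trans
      (le_add_of_nonneg_left (by positivity))
    simpa [Real.zero_rpow hq0.ne'] using h i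
  rcases eq_or_ne v 0 with rfl | hv0
  · refine (hN.gauge_rpow_le_rpow hq0 hu hw fun i => ?_).trans
      (le_add_of_nonneg_right (by positivity))
    simpa [Real.zero_rpow hq0.ne'] using h i
  obtain ⟨s, t, hs, ht, hst, htangent⟩ :=
    Real.exists_tangent_rpow_add_rpow hq0 hq1 (hN.gauge_pos hu0) (hN.gauge_pos hv0)
  have hw_le : ∀ i, |w i| ≤ |(s • u + t • v) i| := fun i => by
    have hsum : 0 ≤ s * u i + t * v i :=
      add_nonneg (mul_nonneg hs (hu i)) (mul_nonneg ht (hv i))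
    rw [abs_of_nonneg (hw i), Pi.add_apply, Pi.smul_apply, Pi.smul_apply, smul_eq_mul,
      smul_eq_mul, abs_of_nonneg hsum]
    exact (Real.rpow_le_rpow_iff (hw i) hsum hq0).1 ((h i).trans (htangent _ _ (hu i) (hv i)))
  calc hN.gauge w ^ q ≤ (s * hN.gauge u + t * hN.gauge v) ^ q := by
        gcongr
        calc hN.gauge w ≤ hN.gauge (s • u + t • v) := hN.gauge_le_of_abs_le hw_le
          _ ≤ hN.gauge (s • u) + hN.gauge (t • v) := map_add_le_add _ _ _
          _ = s * hN.gauge u + t * hN.gauge v := by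
            rw [map_smul_eq_mul, map_smul_eq_mul, Real.norm_of_nonneg hs, Real.norm_of_nonneg ht]
    _ = hN.gauge u ^ q + hN.gauge v ^ q := by
        rw [hst, Real.rpow_inv_rpow (by positivity) hq0.ne']

theorem apply_cfc_eq_gauge (hN : IsSymmetricNorm N) {A : Matrix k k ℂ} (hA : A.IsHermitian)
    (g : ℝ → ℝ) : N (cfc g A) = hN.gauge (g ∘ hA.eigenvalues) := by
  rw [hA.cfc_eq, IsHermitian.cfc, Unitary.conjStarAlgAut_apply,
    hN.unitary_conj (SetLike.coe_mem _)]
  rfl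

end IsSymmetricNorm

/-- If `g : [0,∞) → [0,∞)` is convex and `q ∈ (0,1)` is such that `g^q`
is subadditive, then every symmetric norm satisfies `‖g(A+B)‖^q ≤ ‖g(A)‖^q + ‖g(B)‖^q`
for positive semidefinite `A, B`. -/
theorem symmetric_norm_convex_q_subadditive {n : ℕ} (g : ℝ → ℝ)
    (hg_nonneg : ∀ x ∈ Set.Ici (0:ℝ), 0 ≤ g x)
    (hg_convex : ConvexOn ℝ (Set.Ici 0) g)
    (q : ℝ) (hq0 : 0 < q) (hq1 : q < 1)
    (hgq_subadd : ∀ a b : ℝ, 0 ≤ a → 0 ≤ b → g (a + b) ^ q ≤ g a ^ q + g b ^ q)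
    (A B : Matrix (Fin n) (Fin n) ℂ) (hA : A.PosSemidef) (hB : B.PosSemidef)
    (N : Matrix (Fin n) (Fin n) ℂ → ℝ) (hN : IsSymmetricNorm N) :
    N (cfc g (A + B)) ^ q ≤ N (cfc g A) ^ q + N (cfc g B) ^ q := by
  have hAB := hA.add hB
  obtain ⟨P, hP, Q, hQ, hc⟩ := hA.1.exists_eigenvalues_add_eq hB.1 hAB.1
  rw [hN.apply_cfc_eq_gauge hAB.1, hN.apply_cfc_eq_gauge hA.1, hN.apply_cfc_eq_gauge hB.1, hc]
  set a := hA.1.eigenvalues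
  set b := hB.1.eigenvalues
  have hP' := (mem_doublyStochastic_iff_mem_rowStochastic_and_mem_colStochastic.1 hP).1
  have hQ' := (mem_doublyStochastic_iff_mem_rowStochastic_and_mem_colStochastic.1 hQ).1
  have hPa := nonneg_mulVec_of_mem_rowStochastic hP' hA.eigenvalues_nonneg
  have hQb := nonneg_mulVec_of_mem_rowStochastic hQ' hB.eigenvalues_nonneg
  have hga : ∀ i, 0 ≤ (g ∘ a) i := fun i => hg_nonneg _ (hA.eigenvalues_nonneg i)
  have hgb : ∀ i, 0 ≤ (g ∘ b) i := fun i => hg_nonneg _ (hB.eigenvalues_nonneg i)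
  have hentry : ∀ j, g ((P *ᵥ a + Q *ᵥ b) j) ^ q ≤ (P *ᵥ (g ∘ a)) j ^ q + (Q *ᵥ (g ∘ b)) j ^ q :=
    fun j => (hgq_subadd _ _ (hPa j) (hQb j)).trans <| add_le_add
      (Real.rpow_le_rpow (hg_nonneg _ (hPa j))
        (hg_convex.map_mulVec_le hP' hA.eigenvalues_nonneg j) hq0.le)
      (Real.rpow_le_rpow (hg_nonneg _ (hQb j))
        (hg_convex.map_mulVec_le hQ' hB.eigenvalues_nonneg j) hq0.le)
  calc hN.gauge (g ∘ (P *ᵥ a + Q *ᵥ b)) ^ q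
      ≤ hN.gauge (P *ᵥ (g ∘ a)) ^ q + hN.gauge (Q *ᵥ (g ∘ b)) ^ q :=
        hN.gauge_rpow_le_of_rpow_le hq0 hq1 (nonneg_mulVec_of_mem_rowStochastic hP' hga)
          (nonneg_mulVec_of_mem_rowStochastic hQ' hgb)
          (fun j => hg_nonneg _ (add_nonneg (hPa j) (hQb j))) hentry
    _ ≤ hN.gauge (g ∘ a) ^ q + hN.gauge (g ∘ b) ^ q := by
        gcongr
        · exact hN.gauge_mulVec_le hP _
        · exact hN.gauge_mulVec_le hQ _
end

section
/- Let A, B be n×n positive semidefinite complex matrices such that for every k = 1, …, n the sum of the k smallest eigenvalues of A is at least the sum of the k smallest eigenvalues of B (super-majorization A ≺^w B). Then ‖A‖_! ≥ ‖B‖_! for every symmetric anti-norm ‖·‖_!. -/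
open scoped Matrix ComplexOrder

/-- The eigenvalues of a positive semidefinite complex matrix, sorted in increasing
order (so the k smallest ones come first). -/
noncomputable def sortedEigenvalues {n : ℕ} (A : Matrix (Fin n) (Fin n) ℂ)
    (hA : A.PosSemidef) : Fin n → ℝ :=
  hA.isHermitian.eigenvalues ∘ Tuple.sort hA.isHermitian.eigenvalues

/-!
Let `a` and `b` be the increasingly sorted eigenvalue vectors of `A` and `B`. As long as `b ≤ a`
fails entrywise, the prefix-sum condition yields indices `i < j` with `b i < a i` and `a j < b j`,
and a Robin Hood transfer of mass from `b j` to `b i` keeps the condition while making one more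
entry agree with `a`. Restricted to real diagonal matrices, an anti-norm is concave (superadditive
and homogeneous) and permutation invariant, so it does not decrease along a transfer, which is a
convex combination of `b` and a permutation of it; it is monotone, which handles the final step
`b ≤ a`. Unitary invariance reduces `A` and `B` to the diagonal matrices of `a` and `b`.
-/

open Finset

section Transfer

variable {ι : Type*}

/-- For increasingly sorted `a` and `b` this is the super-majorization `a ≺^w b`. -/
def PrefixSumsLE [Preorder ι] [LocallyFiniteOrderBot ι] (b a : ι → ℝ) : Prop :=
  ∀ k, ∑ m ∈ Iic k, b m ≤ ∑ m ∈ Iic k, a m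

theorem ConcaveOn.le_apply_add_single_sub_single [DecidableEq ι] {g : (ι → ℝ) → ℝ}
    (hconc : ConcaveOn ℝ (Set.Ici 0) g)
    (hperm : ∀ (σ : Equiv.Perm ι) (x : ι → ℝ), 0 ≤ x → g (x ∘ σ) = g x)
    {x : ι → ℝ} (hx : 0 ≤ x) {i j : ι} {t : ℝ} (ht0 : 0 ≤ t) (ht : t ≤ x j - x i) :
    g x ≤ g (x + Pi.single i t - Pi.single j t) := by
  rcases ht0.eq_or_lt with rfl | ht0
  · simp
  have hij : 0 < x j - x i := ht0.trans_le ht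
  have hne : i ≠ j := by rintro rfl; simp at hij
  set s := t / (x j - x i)
  have hs : s * (x j - x i) = t := div_mul_cancel₀ t hij.ne'
  have hs0 : 0 ≤ s := by positivity
  have hs1 : s ≤ 1 := (div_le_one hij).mpr ht
  -- the transfer is the convex combination of `x` and `x` with entries `i`, `j` swapped
  have hcomb :
      x + Pi.single i t - Pi.single j t = (1 - s) • x + s • (x ∘ Equiv.swap i j) := by
    ext m
    rcases eq_or_ne m i with rfl | hmi
    · simp [hne]; linarith
    rcases eq_or_ne m j with rfl | hmj
    · simp [hne.symm]; linarith
    · simp [hmi, hmj, Equiv.swap_apply_of_ne_of_ne hmi hmj]; ring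
  have hxσ : 0 ≤ x ∘ Equiv.swap i j := fun m => hx (Equiv.swap i j m)
  calc g x = (1 - s) • g x + s • g (x ∘ Equiv.swap i j) := by
        rw [hperm _ x hx, smul_eq_mul, smul_eq_mul]; ring
    _ ≤ g ((1 - s) • x + s • (x ∘ Equiv.swap i j)) :=
        hconc.2 hx hxσ (by linarith) hs0 (by ring)
    _ = _ := by rw [hcomb]

variable [LinearOrder ι] [LocallyFiniteOrderBot ι]

theorem PrefixSumsLE.exists_transfer_indices [Fintype ι] {a b : ι → ℝ} (hab : PrefixSumsLE b a)
    (hba : ¬ b ≤ a) : ∃ i j, i < j ∧ b i < a i ∧ a j < b j ∧ ∀ m < j, b m ≤ a m := by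
  classical
  obtain ⟨j, hj, hjmin⟩ :=
    exists_min_image {m | a m < b m} id (by simpa [Pi.le_def, Finset.Nonempty] using hba)
  simp only [mem_filter, mem_univ, true_and, id] at hj hjmin
  have hbelow : ∀ m < j, b m ≤ a m := fun m hm => not_lt.mp fun h => (hjmin m h).not_gt hm
  obtain ⟨i, hij, hi⟩ : ∃ i < j, b i < a i := by
    by_contra! h
    have hIio : ∑ m ∈ Iio j, b m = ∑ m ∈ Iio j, a m :=
      sum_congr rfl fun m hm => (hbelow m (mem_Iio.mp hm)).antisymm (h m (mem_Iio.mp hm))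
    have hIic := hab j
    rw [← Iio_insert, sum_insert notMem_Iio_self, sum_insert notMem_Iio_self] at hIic
    linarith
  exact ⟨i, j, hij, hi, hj, hbelow⟩

theorem PrefixSumsLE.add_single_sub_single {a b : ι → ℝ} (hab : PrefixSumsLE b a) {i j : ι}
    (hij : i < j) {t : ℝ} (ht : b i + t ≤ a i) (hbelow : ∀ m < j, b m ≤ a m) :
    PrefixSumsLE (b + Pi.single i t - Pi.single j t) a := by
  intro k
  rcases le_or_gt j k with hjk | hkj
  · have hsum :
        ∑ m ∈ Iic k, (b + Pi.single i t - Pi.single j t : ι → ℝ) m = ∑ m ∈ Iic k, b m := by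
      simp [sum_add_distrib, sum_sub_distrib, sum_pi_single', hjk, hij.le.trans hjk]
    exact hsum ▸ hab k
  · refine sum_le_sum fun m hm => ?_
    have hmj : m < j := (mem_Iic.mp hm).trans_lt hkj
    rcases eq_or_ne m i with rfl | hmi
    · simpa [hmj.ne] using ht
    · simpa [hmi, hmj.ne] using hbelow m hmj

theorem PrefixSumsLE.apply_le_apply [Fintype ι] {g : (ι → ℝ) → ℝ}
    (hmono : MonotoneOn g (Set.Ici 0)) (hconc : ConcaveOn ℝ (Set.Ici 0) g)
    (hperm : ∀ (σ : Equiv.Perm ι) (x : ι → ℝ), 0 ≤ x → g (x ∘ σ) = g x)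
    {a b : ι → ℝ} (ha0 : 0 ≤ a) (ha : Monotone a) (hb0 : 0 ≤ b) (hab : PrefixSumsLE b a) :
    g b ≤ g a := by
  classical
  induction hd : #{m | b m ≠ a m} using Nat.strong_induction_on generalizing b with
  | _ d ih =>
  by_cases hba : b ≤ a
  · exact hmono hb0 ha0 hba
  obtain ⟨i, j, hij, hi, hj, hbelow⟩ := hab.exists_transfer_indices hba
  -- the largest transfer from `j` to `i` that keeps `b i ≤ a i` and `a j ≤ b j`
  set t := min (a i - b i) (b j - a j)
  have ht0 : 0 < t := lt_min (sub_pos.2 hi) (sub_pos.2 hj)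
  set b' : ι → ℝ := b + Pi.single i t - Pi.single j t
  have hb'i : b' i = b i + t := by simp [b', hij.ne]
  have hb'j : b' j = b j - t := by simp [b', hij.ne']
  have hb'm : ∀ m, m ≠ i → m ≠ j → b' m = b m := by
    intro m hmi hmj; simp [b', hmi, hmj]
  have hti : t ≤ a i - b i := min_le_left _ _
  have htj : t ≤ b j - a j := min_le_right _ _
  have hb'0 : 0 ≤ b' := by
    intro m
    rcases eq_or_ne m i with rfl | hmi
    · rw [hb'i]; linarith [hb0 m]
    rcases eq_or_ne m j with rfl | hmj
    · rw [hb'j]; linarith [ha0 m]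
    · rw [hb'm m hmi hmj]; exact hb0 m
  have hfewer : #{m | b' m ≠ a m} < d := by
    rw [← hd]
    refine card_lt_card ((ssubset_iff_of_subset fun m => ?_).2 ?_)
    · rcases eq_or_ne m i with rfl | hmi
      · simp [hi.ne]
      rcases eq_or_ne m j with rfl | hmj
      · simp [hj.ne']
      · simp [hb'm m hmi hmj]
    · rcases le_total (a i - b i) (b j - a j) with h | h
      · exact ⟨i, by simp [hi.ne], by simp [hb'i, t, min_eq_left h]⟩
      · exact ⟨j, by simp [hj.ne'], by simp [hb'j, t, min_eq_right h]⟩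
  calc g b ≤ g b' :=
        hconc.le_apply_add_single_sub_single hperm hb0 ht0.le (by linarith [ha hij.le])
    _ ≤ g a := ih _ hfewer hb'0 (hab.add_single_sub_single hij (by linarith) hbelow) rfl

end Transfer

namespace Matrix

theorem permMatrix_mem_unitaryGroup_s14 {k : Type*} [Fintype k] [DecidableEq k]
    (σ : Equiv.Perm k) : σ.permMatrix ℂ ∈ unitaryGroup k ℂ := by
  rw [mem_unitaryGroup_iff, star_eq_conjTranspose, conjTranspose_permMatrix, ← permMatrix_mul,
    inv_mul_cancel, permMatrix_one]

theorem permMatrix_mul_diagonal_mul_conjTranspose {k R : Type*} [Fintype k] [DecidableEq k]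
    [Semiring R] [StarRing R] (σ : Equiv.Perm k) (d : k → R) :
    σ.permMatrix R * diagonal d * (σ.permMatrix R)ᴴ = diagonal (d ∘ σ) := by
  rw [conjTranspose_permMatrix, PEquiv.toMatrix_toPEquiv_mul, Equiv.Perm.permMatrix,
    PEquiv.mul_toMatrix_toPEquiv, submatrix_submatrix]
  exact submatrix_diagonal_equiv d σ

theorem posSemidef_diagonal_ofReal {k : Type*} [DecidableEq k] {x : k → ℝ} (hx : 0 ≤ x) :
    (diagonal (RCLike.ofReal ∘ x : k → ℂ)).PosSemidef :=
  posSemidef_diagonal_iff.2 fun i => by simpa using hx i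

end Matrix

open Matrix

namespace IsSymmetricAntiNorm

variable {k : Type*} [Fintype k] [DecidableEq k] {N : Matrix k k ℂ → ℝ}

theorem smul_add_smul_le (hN : IsSymmetricAntiNorm N) {A B : Matrix k k ℂ} (hA : A.PosSemidef)
    (hB : B.PosSemidef) {c d : ℝ} (hc : 0 ≤ c) (hd : 0 ≤ d) :
    c * N A + d * N B ≤ N (c • A + d • B) := by
  rw [← hN.2.1 c hc A hA, ← hN.2.1 d hd B hB]
  exact hN.2.2.1 _ _ (hA.smul hc) (hB.smul hd)

theorem le_of_sub_posSemidef (hN : IsSymmetricAntiNorm N) {A B : Matrix k k ℂ} (hA : A.PosSemidef)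
    (hBA : (B - A).PosSemidef) : N A ≤ N B := by
  have := hN.2.2.1 A (B - A) hA hBA
  rw [add_sub_cancel] at this
  linarith [hN.1 _ hBA]

theorem apply_eq_diagonal_eigenvalues (hN : IsSymmetricAntiNorm N) {A : Matrix k k ℂ}
    (hA : A.PosSemidef) :
    N A = N (diagonal (RCLike.ofReal ∘ hA.isHermitian.eigenvalues)) := by
  conv_lhs => rw [hA.isHermitian.spectral_theorem]
  exact hN.2.2.2 _ _ hA.isHermitian.eigenvectorUnitary.2
    (posSemidef_diagonal_ofReal fun i => hA.eigenvalues_nonneg i)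

theorem monotoneOn_diagonal (hN : IsSymmetricAntiNorm N) :
    MonotoneOn (fun x : k → ℝ => N (diagonal (RCLike.ofReal ∘ x))) (Set.Ici 0) := by
  intro x hx y _ hxy
  refine hN.le_of_sub_posSemidef (posSemidef_diagonal_ofReal hx) ?_
  rw [diagonal_sub]
  simpa using posSemidef_diagonal_ofReal (sub_nonneg.2 hxy)

theorem concaveOn_diagonal (hN : IsSymmetricAntiNorm N) :
    ConcaveOn ℝ (Set.Ici 0) (fun x : k → ℝ => N (diagonal (RCLike.ofReal ∘ x))) := by
  refine ⟨convex_Ici 0, fun x hx y hy c d hc hd _ => ?_⟩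
  have hdiag : diagonal (RCLike.ofReal ∘ (c • x + d • y) : k → ℂ) =
      c • diagonal (RCLike.ofReal ∘ x) + d • diagonal (RCLike.ofReal ∘ y) := by
    ext i j
    by_cases hij : i = j <;> simp [hij]
  simpa only [hdiag, smul_eq_mul] using
    hN.smul_add_smul_le (posSemidef_diagonal_ofReal hx) (posSemidef_diagonal_ofReal hy) hc hd

theorem diagonal_comp_perm (hN : IsSymmetricAntiNorm N) (σ : Equiv.Perm k) {x : k → ℝ}
    (hx : 0 ≤ x) : N (diagonal (RCLike.ofReal ∘ (x ∘ σ))) = N (diagonal (RCLike.ofReal ∘ x)) := by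
  rw [← Function.comp_assoc, ← permMatrix_mul_diagonal_mul_conjTranspose σ]
  exact hN.2.2.2 _ _ (permMatrix_mem_unitaryGroup_s14 σ) (posSemidef_diagonal_ofReal hx)

theorem apply_eq_diagonal_sortedEigenvalues {n : ℕ} {N : Matrix (Fin n) (Fin n) ℂ → ℝ}
    (hN : IsSymmetricAntiNorm N) {A : Matrix (Fin n) (Fin n) ℂ} (hA : A.PosSemidef) :
    N A = N (diagonal (RCLike.ofReal ∘ sortedEigenvalues A hA)) := by
  rw [hN.apply_eq_diagonal_eigenvalues hA, sortedEigenvalues,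
    hN.diagonal_comp_perm _ fun i => hA.eigenvalues_nonneg i]

end IsSymmetricAntiNorm

theorem Fin.sum_Iic_eq_sum_castLE {M : Type*} [AddCommMonoid M] {n : ℕ} (f : Fin n → M)
    (k : Fin n) :
    ∑ m ∈ Iic k, f m = ∑ j : Fin (k + 1), f (Fin.castLE k.2 j) := by
  have hk : Fin.castLE k.2 (Fin.last k) = k := Fin.ext rfl
  rw [← hk, ← Fin.map_castLEEmb_Iic, sum_map, ← Fin.top_eq_last, Iic_top]
  rfl

/-- If `A ≺^w B`, i.e. for every `k` the sum of the `k` smallest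
eigenvalues of `A` dominates that of `B`, then `‖A‖_! ≥ ‖B‖_!` for every symmetric
anti-norm. -/
theorem antiNorm_superMajorization {n : ℕ}
    (A B : Matrix (Fin n) (Fin n) ℂ) (hA : A.PosSemidef) (hB : B.PosSemidef)
    (hmaj : ∀ (k : ℕ) (hk : k ≤ n),
      ∑ j : Fin k, sortedEigenvalues B hB (Fin.castLE hk j) ≤
        ∑ j : Fin k, sortedEigenvalues A hA (Fin.castLE hk j))
    (N : Matrix (Fin n) (Fin n) ℂ → ℝ) (hN : IsSymmetricAntiNorm N) :
    N B ≤ N A := by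
  rw [hN.apply_eq_diagonal_sortedEigenvalues hA, hN.apply_eq_diagonal_sortedEigenvalues hB]
  refine PrefixSumsLE.apply_le_apply hN.monotoneOn_diagonal hN.concaveOn_diagonal
    (fun σ x hx => hN.diagonal_comp_perm σ hx) (fun i => hA.eigenvalues_nonneg _)
    (Tuple.monotone_sort _) (fun i => hB.eigenvalues_nonneg _) fun k => ?_
  simpa only [Fin.sum_Iic_eq_sum_castLE] using hmaj (k + 1) k.2
end

section
/- Let g : [0,∞) → [0,∞) be convex with g(0) = 0 and let q ∈ (0,1) be such that g^q is subadditive, i.e. g(a+b)^q ≤ g(a)^q + g(b)^q for all a, b ≥ 0. Then for every m×m positive semidefinite complex matrix A = [a_{ij}], Tr g(A) ≤ (∑_{i=1}^m g(a_{ii})^q)^{1/q}. -/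
/-!
The trace of `g(A)` is `∑ g(λᵢ)` over the eigenvalues `λᵢ ≥ 0` of `A`. A convex `g` with
`g 0 = 0` is superadditive on `[0, ∞)`, so `∑ g(λᵢ) ≤ g(∑ λᵢ) = g(∑ aᵢᵢ)`, since both sums
equal `Tr A`. Finally, subadditivity of `g^q` gives `g(∑ aᵢᵢ)^q ≤ ∑ g(aᵢᵢ)^q`.
-/

open scoped Matrix ComplexOrder

namespace ConvexOn

variable {g : ℝ → ℝ}

lemma map_mul_le_of_map_zero_nonpos (hg : ConvexOn ℝ (Set.Ici 0) g) (hg0 : g 0 ≤ 0)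
    {t z : ℝ} (ht₀ : 0 ≤ t) (ht₁ : t ≤ 1) (hz : 0 ≤ z) : g (t * z) ≤ t * g z := by
  have h := hg.2 (Set.mem_Ici.2 hz) Set.self_mem_Ici ht₀ (sub_nonneg.2 ht₁) (add_sub_cancel t 1)
  simp only [smul_eq_mul, mul_zero, add_zero] at h
  linarith [mul_nonpos_of_nonneg_of_nonpos (sub_nonneg.2 ht₁) hg0]

lemma add_le_map_add_of_map_zero_nonpos (hg : ConvexOn ℝ (Set.Ici 0) g) (hg0 : g 0 ≤ 0)
    {x y : ℝ} (hx : 0 ≤ x) (hy : 0 ≤ y) : g x + g y ≤ g (x + y) := by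
  rcases (add_nonneg hx hy).eq_or_lt with hxy | hxy
  · obtain ⟨rfl, rfl⟩ : x = 0 ∧ y = 0 := ⟨by linarith, by linarith⟩
    simpa using hg0
  have key {a : ℝ} (ha : 0 ≤ a) (hay : a ≤ x + y) : g a ≤ a / (x + y) * g (x + y) := by
    simpa [div_mul_cancel₀ a hxy.ne'] using hg.map_mul_le_of_map_zero_nonpos hg0
      (div_nonneg ha hxy.le) ((div_le_one hxy).2 hay) hxy.le
  have hsum : x / (x + y) * g (x + y) + y / (x + y) * g (x + y) = g (x + y) := by
    field_simp
  linarith [key hx (by linarith), key hy (by linarith)]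

lemma sum_le_map_sum_of_map_zero {ι : Type*} (hg : ConvexOn ℝ (Set.Ici 0) g) (hg0 : g 0 = 0)
    (s : Finset ι) {x : ι → ℝ} (hx : ∀ i ∈ s, 0 ≤ x i) :
    ∑ i ∈ s, g (x i) ≤ g (∑ i ∈ s, x i) := by
  have := Finset.le_sum_of_subadditive_on_pred (fun a => -g a) (0 ≤ ·) (by simp [hg0])
    (fun a b ha hb => by
      simpa [neg_add, add_comm] using hg.add_le_map_add_of_map_zero_nonpos hg0.le ha hb)
    (fun _ _ => add_nonneg) x hx
  simpa [Finset.sum_neg_distrib] using this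

end ConvexOn

lemma map_sum_le_rpow_sum_rpow {ι : Type*} {g : ℝ → ℝ} {q : ℝ} (hq : 0 < q) (hg0 : g 0 = 0)
    (hgq : ∀ a b : ℝ, 0 ≤ a → 0 ≤ b → g (a + b) ^ q ≤ g a ^ q + g b ^ q)
    (s : Finset ι) {x : ι → ℝ} (hx : ∀ i ∈ s, 0 ≤ x i) (hgs : 0 ≤ g (∑ i ∈ s, x i)) :
    g (∑ i ∈ s, x i) ≤ (∑ i ∈ s, g (x i) ^ q) ^ (1 / q) := by
  have hsub : g (∑ i ∈ s, x i) ^ q ≤ ∑ i ∈ s, g (x i) ^ q :=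
    Finset.le_sum_of_subadditive_on_pred (fun a => g a ^ q) (0 ≤ ·)
      (by simp [hg0, Real.zero_rpow hq.ne']) hgq (fun _ _ => add_nonneg) x hx
  calc g (∑ i ∈ s, x i) = (g (∑ i ∈ s, x i) ^ q) ^ (1 / q) := by
        rw [one_div, Real.rpow_rpow_inv hgs hq.ne']
    _ ≤ _ := by gcongr

namespace Matrix.IsHermitian

variable {𝕜 n : Type*} [RCLike 𝕜] [Fintype n] [DecidableEq n] {A : Matrix n n 𝕜}

lemma trace_cfc (hA : A.IsHermitian) (f : ℝ → ℝ) :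
    (cfc f A).trace = ∑ i, (f (hA.eigenvalues i) : 𝕜) := by
  rw [hA.cfc_eq, IsHermitian.cfc, Unitary.conjStarAlgAut_apply, trace_mul_cycle,
    Unitary.coe_star_mul_self, one_mul, trace_diagonal]
  rfl

lemma sum_eigenvalues_eq_sum_re_diag (hA : A.IsHermitian) :
    ∑ i, hA.eigenvalues i = ∑ i, RCLike.re (A i i) := by
  simpa [trace] using (congrArg RCLike.re hA.trace_eq_sum_eigenvalues).symm

end Matrix.IsHermitian

theorem trace_convex_diagonal_bound_general {m : ℕ} (g : ℝ → ℝ)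
    (hg_nonneg : ∀ x ∈ Set.Ici (0:ℝ), 0 ≤ g x)
    (hg_convex : ConvexOn ℝ (Set.Ici 0) g)
    (hg0 : g 0 = 0)
    (q : ℝ) (hq0 : 0 < q)
    (hgq_subadd : ∀ a b : ℝ, 0 ≤ a → 0 ≤ b → g (a + b) ^ q ≤ g a ^ q + g b ^ q)
    (A : Matrix (Fin m) (Fin m) ℂ) (hA : A.PosSemidef) :
    (cfc g A).trace.re ≤ (∑ i, g ((A i i).re) ^ q) ^ (1 / q) := by
  have hdiag : ∀ i ∈ Finset.univ, 0 ≤ (A i i).re :=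
    fun i _ => (Complex.nonneg_iff.1 hA.diag_nonneg).1
  calc (cfc g A).trace.re = ∑ i, g (hA.1.eigenvalues i) := by simp [hA.1.trace_cfc]
    _ ≤ g (∑ i, hA.1.eigenvalues i) :=
      hg_convex.sum_le_map_sum_of_map_zero hg0 _ fun i _ => hA.eigenvalues_nonneg i
    _ = g (∑ i, (A i i).re) := by rw [hA.1.sum_eigenvalues_eq_sum_re_diag]; rfl
    _ ≤ _ := map_sum_le_rpow_sum_rpow hq0 hg0 hgq_subadd _ hdiag
      (hg_nonneg _ (Finset.sum_nonneg hdiag))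

/-- If `g : [0,∞) → [0,∞)` is convex with `g(0)=0` and `q ∈ (0,1)` is
such that `g^q` is subadditive, then for every positive semidefinite `A = [a_{ij}]`,
`Tr g(A) ≤ (∑ i, g(a_{ii})^q)^{1/q}`. -/
theorem trace_convex_diagonal_bound {m : ℕ} (g : ℝ → ℝ)
    (hg_nonneg : ∀ x ∈ Set.Ici (0:ℝ), 0 ≤ g x)
    (hg_convex : ConvexOn ℝ (Set.Ici 0) g)
    (hg0 : g 0 = 0)
    (q : ℝ) (hq0 : 0 < q) (hq1 : q < 1)
    (hgq_subadd : ∀ a b : ℝ, 0 ≤ a → 0 ≤ b → g (a + b) ^ q ≤ g a ^ q + g b ^ q)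
    (A : Matrix (Fin m) (Fin m) ℂ) (hA : A.PosSemidef) :
    (cfc g A).trace.re ≤ (∑ i, g ((A i i).re) ^ q) ^ (1 / q) :=
  trace_convex_diagonal_bound_general g hg_nonneg hg_convex hg0 q hq0 hgq_subadd A hA
end

section
/- Let f : [0,∞) → [0,∞) be concave and let p ∈ (1,∞) be such that f^p is superadditive, i.e. f(a+b)^p ≥ f(a)^p + f(b)^p for all a, b ≥ 0. Then for every m×m positive semidefinite complex matrix A = [a_{ij}], Tr f(A) ≥ (∑_{i=1}^m f(a_{ii})^p)^{1/p}. -/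
/-!
Superadditivity of `f ^ p` on `[0, ∞)` gives `(∑ f(aᵢᵢ) ^ p) ^ (1/p) ≤ f(∑ aᵢᵢ) = f(Tr A)`.
Taking `a = b = 0` in it forces `f 0 = 0`, and a concave function on `[0, ∞)` with `f 0 ≥ 0` is
subadditive there, since `t f(x) ≤ f(t x)` for `t ∈ [0, 1]`. Hence, with `λᵢ ≥ 0` the eigenvalues
of `A`, `f(Tr A) = f(∑ λᵢ) ≤ ∑ f(λᵢ) = Tr f(A)`.
-/

open scoped Matrix ComplexOrder

open Set

theorem ConcaveOn.mul_le_map_smul {E : Type*} [AddCommGroup E] [Module ℝ E] {s : Set E}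
    {f : E → ℝ} (hf : ConcaveOn ℝ s f) (h0s : 0 ∈ s) (hf0 : 0 ≤ f 0) {x : E} (hx : x ∈ s)
    {t : ℝ} (ht0 : 0 ≤ t) (ht1 : t ≤ 1) : t * f x ≤ f (t • x) := by
  have h := hf.2 h0s hx (sub_nonneg.2 ht1) ht0 (sub_add_cancel 1 t)
  simp only [smul_zero, zero_add, smul_eq_mul] at h
  linarith [mul_nonneg (sub_nonneg.2 ht1) hf0]

theorem ConcaveOn.map_add_le_of_nonneg {f : ℝ → ℝ} (hf : ConcaveOn ℝ (Ici 0) f) (hf0 : 0 ≤ f 0)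
    {a b : ℝ} (ha : 0 ≤ a) (hb : 0 ≤ b) : f (a + b) ≤ f a + f b := by
  rcases (add_nonneg ha hb).eq_or_lt with hab | hab
  · obtain ⟨rfl, rfl⟩ : a = 0 ∧ b = 0 := ⟨by linarith, by linarith⟩
    simpa using hf0
  have hfa := hf.mul_le_map_smul self_mem_Ici hf0 hab.le (t := a / (a + b)) (by positivity)
    ((div_le_one hab).2 (by linarith))
  have hfb := hf.mul_le_map_smul self_mem_Ici hf0 hab.le (t := b / (a + b)) (by positivity)
    ((div_le_one hab).2 (by linarith))
  rw [smul_eq_mul, div_mul_cancel₀ _ hab.ne'] at hfa hfb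
  calc f (a + b) = a / (a + b) * f (a + b) + b / (a + b) * f (a + b) := by
        field_simp
    _ ≤ f a + f b := add_le_add hfa hfb

theorem Finset.sum_le_map_sum_of_superadditive_on_Ici {ι : Type*} {F : ℝ → ℝ} (hF0 : 0 ≤ F 0)
    (hF : ∀ a b : ℝ, 0 ≤ a → 0 ≤ b → F a + F b ≤ F (a + b)) (s : Finset ι) {g : ι → ℝ}
    (hg : ∀ i ∈ s, 0 ≤ g i) : ∑ i ∈ s, F (g i) ≤ F (∑ i ∈ s, g i) := by
  have h := Finset.le_sum_of_subadditive_on_pred (fun x => -F x) (0 ≤ ·) (by simpa using hF0)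
    (fun a b ha hb => by linarith [hF a b ha hb]) (fun _ _ => add_nonneg) g hg
  simpa only [Finset.sum_neg_distrib, neg_le_neg_iff] using h

theorem Matrix.IsHermitian.trace_cfc_s18 {𝕜 n : Type*} [RCLike 𝕜] [Fintype n] [DecidableEq n]
    {A : Matrix n n 𝕜} (hA : A.IsHermitian) (f : ℝ → ℝ) :
    (cfc f A).trace = ∑ i, (f (hA.eigenvalues i) : 𝕜) := by
  rw [hA.cfc_eq, Matrix.IsHermitian.cfc, Unitary.conjStarAlgAut_apply, Matrix.trace_mul_cycle,
    Unitary.star_mul_self_of_mem (SetLike.coe_mem _), one_mul, Matrix.trace_diagonal]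
  rfl

theorem Matrix.PosSemidef.map_re_trace_le_re_trace_cfc {𝕜 n : Type*} [RCLike 𝕜] [Fintype n]
    [DecidableEq n] {A : Matrix n n 𝕜} (hA : A.PosSemidef) {f : ℝ → ℝ}
    (hf : ∀ a b : ℝ, 0 ≤ a → 0 ≤ b → f (a + b) ≤ f a + f b) (hf0 : f 0 = 0) :
    f (RCLike.re A.trace) ≤ RCLike.re (cfc f A).trace := by
  rw [hA.isHermitian.trace_cfc_s18, hA.isHermitian.trace_eq_sum_eigenvalues]
  simp only [map_sum, RCLike.ofReal_re]
  exact Finset.le_sum_of_subadditive_on_pred f (0 ≤ ·) hf0.le hf (fun _ _ => add_nonneg) _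
    fun i _ => hA.eigenvalues_nonneg i

theorem Finset.rpow_sum_map_rpow_le_map_sum {ι : Type*} {f : ℝ → ℝ} {p : ℝ} (hp : 0 < p)
    (hf_nonneg : ∀ x, 0 ≤ x → 0 ≤ f x)
    (hfp : ∀ a b : ℝ, 0 ≤ a → 0 ≤ b → f a ^ p + f b ^ p ≤ f (a + b) ^ p)
    (s : Finset ι) {g : ι → ℝ} (hg : ∀ i ∈ s, 0 ≤ g i) :
    (∑ i ∈ s, f (g i) ^ p) ^ (1 / p) ≤ f (∑ i ∈ s, g i) := by
  rw [one_div, Real.rpow_inv_le_iff_of_pos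
    (Finset.sum_nonneg fun i hi => Real.rpow_nonneg (hf_nonneg _ (hg i hi)) p)
    (hf_nonneg _ (Finset.sum_nonneg hg)) hp]
  exact Finset.sum_le_map_sum_of_superadditive_on_Ici (F := (f · ^ p))
    (Real.rpow_nonneg (hf_nonneg 0 le_rfl) p) hfp s hg

/-- If `f : [0,∞) → [0,∞)` is concave and `p ∈ (1,∞)` is such that
`f^p` is superadditive, then for every positive semidefinite `A = [a_{ij}]`,
`Tr f(A) ≥ (∑ i, f(a_{ii})^p)^{1/p}`. -/
theorem trace_concave_diagonal_bound {m : ℕ} (f : ℝ → ℝ)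
    (hf_nonneg : ∀ x ∈ Set.Ici (0:ℝ), 0 ≤ f x)
    (hf_concave : ConcaveOn ℝ (Set.Ici 0) f)
    (p : ℝ) (hp : 1 < p)
    (hfp_superadd : ∀ a b : ℝ, 0 ≤ a → 0 ≤ b → f a ^ p + f b ^ p ≤ f (a + b) ^ p)
    (A : Matrix (Fin m) (Fin m) ℂ) (hA : A.PosSemidef) :
    (∑ i, f ((A i i).re) ^ p) ^ (1 / p) ≤ (cfc f A).trace.re := by
  have hp0 : 0 < p := by linarith
  have hf0 : f 0 = 0 := by
    have h := hfp_superadd 0 0 le_rfl le_rfl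
    rw [add_zero] at h
    exact (Real.rpow_eq_zero (hf_nonneg 0 self_mem_Ici) hp0.ne').1
      (le_antisymm (by linarith) (Real.rpow_nonneg (hf_nonneg 0 self_mem_Ici) p))
  have hdiag : ∀ i ∈ Finset.univ, 0 ≤ (A i i).re := fun i _ =>
    (Complex.nonneg_iff.1 hA.diag_nonneg).1
  calc (∑ i, f ((A i i).re) ^ p) ^ (1 / p) ≤ f (∑ i, (A i i).re) :=
        Finset.rpow_sum_map_rpow_le_map_sum hp0 hf_nonneg hfp_superadd _ hdiag
    _ = f A.trace.re := by rw [Matrix.trace, Complex.re_sum]; rfl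
    _ ≤ (cfc f A).trace.re := hA.map_re_trace_le_re_trace_cfc
        (fun a b ha hb => hf_concave.map_add_le_of_nonneg (hf_nonneg 0 self_mem_Ici) ha hb) hf0
end
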